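/- arXiv:2401.07101 — 2 statements merged into one kernel-verified Lean document; each statement's English description precedes it below -/
import Mathlib

section
/- Let G be the group of order p^{2r+1}·2^n described in the context. Then: (a) the number of subgroups K of P with K normal in P, K ≠ P, and P/K cyclic equals (p^{2r} − 1)/(p − 1); and (b) among these, the number of K that contain the subgroup generated by x, y₁^{k^j}z₁, …, y_r^{k^j}z_r for some j with 1 ≤ j ≤ 2^{n−1} equals 2^{n−1}·(p^r − 1)/(p − 1). -/
open scoped Classical

namespace Paper

variable {G : Type*} [Group G] [Fintype G]

noncomputable instance : Fintype (Subgroup G) :=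
  Fintype.ofInjective (fun H : Subgroup G => (H : Set G)) SetLike.coe_injective

/-- `M̂ = (1/|M|) ∑_{m ∈ M} m` in the rational group algebra `ℚ[G]`. -/
noncomputable def hat (M : Subgroup G) : MonoidAlgebra ℚ G :=
  (Nat.card M : ℚ)⁻¹ • ∑ m : M, MonoidAlgebra.of ℚ G (m : G)

/-- `L` is a normal subgroup of `H` properly containing `K`. -/
def NormalOver (H K L : Subgroup G) : Prop :=
  L ≤ H ∧ K < L ∧ ∀ h ∈ H, ∀ g ∈ L, h⁻¹ * g * h ∈ L

/-- `L` is minimal among the normal subgroups of `H` properly containing `K`. -/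
def MinimalOver (H K L : Subgroup G) : Prop :=
  NormalOver H K L ∧ ∀ L' : Subgroup G, NormalOver H K L' → L' ≤ L → L' = L

/-- `ε(H,K) = K̂` if `H = K`, and otherwise `∏_L (K̂ - L̂)`, the product running over
the normal subgroups `L` of `H` minimal with respect to properly containing `K`
(all such factors commute pairwise, so the product is order-independent). -/
noncomputable def eps (H K : Subgroup G) : MonoidAlgebra ℚ G :=
  if H = K then hat K
  else (({L : Subgroup G | MinimalOver H K L}.toFinset).toList.map
    fun L => hat K - hat L).prod

/-- The subgroup `[H,g] = ⟨g⁻¹h⁻¹gh : h ∈ H⟩`. -/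
def commSub (H : Subgroup G) (g : G) : Subgroup G :=
  Subgroup.closure {c : G | ∃ h ∈ H, c = g⁻¹ * h⁻¹ * g * h}

/-- The quotient `H/K` is cyclic (elementwise formulation: some `h ∈ H` is such that
every `g ∈ H` lies in a coset `h^m K`). -/
def CyclicQuot (H K : Subgroup G) : Prop :=
  ∃ h ∈ H, ∀ g ∈ H, ∃ m : ℤ, (h ^ m)⁻¹ * g ∈ K

/-- `K` is normal in `H` (elementwise formulation). -/
def NormalIn (H K : Subgroup G) : Prop :=
  ∀ h ∈ H, ∀ g ∈ K, h⁻¹ * g * h ∈ K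

/-- `(H,K)` is a Shoda pair of `G`. -/
def IsShodaPair (H K : Subgroup G) : Prop :=
  K ≤ H ∧ NormalIn H K ∧ CyclicQuot H K ∧
    ∀ g : G, commSub H g ⊓ H ≤ K → g ∈ H

/-- `(H,K)` is a strong Shoda pair of `G`: conditions (SS1), (SS2), (SS3).
Maximal abelianness of `H/K` in `N_G(K)/K` is phrased via the Galois correspondence
between subgroups of `N_G(K)/K` and subgroups of `G` lying between `K` and `N_G(K)`. -/
def IsStrongShodaPair (H K : Subgroup G) : Prop :=
  -- (SS1): `H` is a normal subgroup of `N_G(K)`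
  (H ≤ Subgroup.normalizer (K : Set G) ∧ ∀ g ∈ Subgroup.normalizer (K : Set G), ∀ h ∈ H, g⁻¹ * h * g ∈ H) ∧
  -- (SS2): `H/K` is cyclic and a maximal abelian subgroup of `N_G(K)/K`
  (CyclicQuot H K ∧
    (∀ h₁ ∈ H, ∀ h₂ ∈ H, h₁⁻¹ * h₂⁻¹ * h₁ * h₂ ∈ K) ∧
    ∀ C : Subgroup G, K ≤ C → C ≤ Subgroup.normalizer (K : Set G) →
      (∀ c₁ ∈ C, ∀ c₂ ∈ C, c₁⁻¹ * c₂⁻¹ * c₁ * c₂ ∈ K) → H ≤ C → C = H) ∧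
  -- (SS3): `ε(H,K)·(g⁻¹ ε(H,K) g) = 0` for `g ∉ N_G(K)`
  (∀ g : G, g ∉ Subgroup.normalizer (K : Set G) →
    eps H K * (MonoidAlgebra.of ℚ G g⁻¹ * eps H K * MonoidAlgebra.of ℚ G g) = 0)


/-- The data of the group `G = P ⋊ D_{2^n}` of order `p^{2r+1}·2^n`: an odd prime
`p ≡ 1 (mod 4)`, `r ≥ 1`, `n ≥ 3` with `2^{n-1}` the exact power of `2` dividing
`p - 1`, an integer `k` of multiplicative order `2^{n-1}` modulo `p` with inverse `q`
modulo `p`, and generators `x, y₁, …, y_r, z₁, …, z_r, a, b` of `G` subject to the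
listed relations (commutator convention `[u,v] = u⁻¹v⁻¹uv`). -/
structure GData (G : Type*) [Group G] [Fintype G] where
  p : ℕ
  r : ℕ
  n : ℕ
  k : ℕ
  q : ℕ
  x : G
  y : Fin r → G
  z : Fin r → G
  a : G
  b : G
  hp : p.Prime
  hp4 : p % 4 = 1
  hr : 1 ≤ r
  hn : 3 ≤ n
  hdvd : 2 ^ (n - 1) ∣ p - 1
  hndvd : ¬ 2 ^ n ∣ p - 1
  hordk : orderOf ((k : ZMod p)) = 2 ^ (n - 1)
  hkq : ((k : ZMod p)) * (q : ZMod p) = 1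
  hcard : Fintype.card G = p ^ (2 * r + 1) * 2 ^ n
  hgen : Subgroup.closure (({x, a, b} : Set G) ∪ Set.range y ∪ Set.range z) = ⊤
  hxp : x ^ p = 1
  hyp : ∀ i, y i ^ p = 1
  hzp : ∀ i, z i ^ p = 1
  han : a ^ 2 ^ (n - 1) = 1
  hb2 : b ^ 2 = 1
  hxy : ∀ i, x⁻¹ * (y i)⁻¹ * x * y i = 1
  hxz : ∀ i, x⁻¹ * (z i)⁻¹ * x * z i = 1
  hyy : ∀ i j, (y i)⁻¹ * (y j)⁻¹ * y i * y j = 1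
  hzz : ∀ i j, (z i)⁻¹ * (z j)⁻¹ * z i * z j = 1
  hyz : ∀ i, (y i)⁻¹ * (z i)⁻¹ * y i * z i = x
  hyz' : ∀ i j, i ≠ j → (y i)⁻¹ * (z j)⁻¹ * y i * z j = 1
  hax : a⁻¹ * x⁻¹ * a * x = 1
  hay : ∀ i, a⁻¹ * (y i)⁻¹ * a * y i = (y i) ^ (1 - (k : ℤ))
  haz : ∀ i, a⁻¹ * (z i)⁻¹ * a * z i = (z i) ^ (1 - (q : ℤ))
  hbx : b⁻¹ * x⁻¹ * b * x = x ^ 2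
  hby : ∀ i, b⁻¹ * (y i)⁻¹ * b * y i = z i * y i
  hbz : ∀ i, b⁻¹ * (z i)⁻¹ * b * z i = y i * z i
  hba : b⁻¹ * a⁻¹ * b * a = a ^ 2

variable {G : Type*} [Group G] [Fintype G]

/-- The subgroup `P = ⟨x, y₁, …, y_r, z₁, …, z_r⟩` of `G`. -/
def GData.P (d : GData G) : Subgroup G :=
  Subgroup.closure (({d.x} : Set G) ∪ Set.range d.y ∪ Set.range d.z)

end Paper

/-!
The words `x ^ c * ∏ yᵢ ^ aᵢ * ∏ zᵢ ^ bᵢ` multiply like the elements `(c, a, b)` of the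
Heisenberg group over `ZMod p`, which gives a homomorphism from that group onto `P`. The relations
show that `a` and `b` normalize `P`, so `G = ⟨b⟩⟨a⟩P` and `|P| ≥ |G| / 2 ^ n = p ^ (2r + 1)`:
the homomorphism is an isomorphism. A cyclic quotient is abelian, so `K` contains the commutator
`x = [y₁, z₁]`, and the subgroups `K` of (a) are the preimages of the hyperplanes of
`V = (ZMod p) ^ (2r)`; hyperplanes are kernels of nonzero functionals up to scalars, i.e. points
of the projective space of the dual, and there are `(p ^ (2r) - 1) / (p - 1)` of them.
The group `⟨x, yᵢ ^ t * zᵢ⟩` corresponds to the `r`-dimensional graph `{(t • w, w)}`. Hyperplanes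
containing it are the hyperplanes of an `r`-dimensional quotient, and two such graphs for
`t ≠ s` span `V`, so no hyperplane contains both. As `k` has order `2 ^ (n - 1)`, the `k ^ j` with
`1 ≤ j ≤ 2 ^ (n - 1)` are distinct, which gives the count in (b).
-/

section GroupLemmas

variable {G : Type*} [Group G]

theorem Subgroup.closure_induction_right_of_finite [Finite G] {S : Set G} {motive : G → Prop}
    (one : motive 1) (mul_right : ∀ g, ∀ s ∈ S, motive g → motive (g * s)) {g : G}
    (hg : g ∈ closure S) : motive g := by
  rw [← mem_toSubmonoid, closure_toSubmonoid_of_finite] at hg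
  induction hg using Submonoid.closure_induction_right with
  | one => exact one
  | mul_right g _ s hs ih => exact mul_right g s hs ih

theorem map_mul_of_map_mul_right {H : Type*} [Group H] [Finite H] {S : Set H}
    (hS : Subgroup.closure S = ⊤) {f : H → G} (one : f 1 = 1)
    (mul_right : ∀ h, ∀ s ∈ S, f (h * s) = f h * f s) (a b : H) : f (a * b) = f a * f b := by
  refine Subgroup.closure_induction_right_of_finite (motive := fun b => f (a * b) = f a * f b)
    (by rw [mul_one, one, mul_one]) (fun b s hs ih => ?_) (hS ▸ Subgroup.mem_top b)
  rw [← mul_assoc, mul_right _ s hs, ih, mul_right b s hs, mul_assoc]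

theorem inv_mul_mul_eq_mul_inv_of_commutator_eq {u v w : G} (h : u⁻¹ * v⁻¹ * u * v = w) :
    u⁻¹ * v * u = v * w⁻¹ := by
  rw [← h]; group

theorem commute_of_commutator_eq_one {u v : G} (h : u⁻¹ * v⁻¹ * u * v = 1) : Commute u v := by
  have := inv_mul_mul_eq_mul_inv_of_commutator_eq h
  rw [inv_one, mul_one, mul_assoc, inv_mul_eq_iff_eq_mul] at this
  exact this.symm

theorem Subgroup.inv_mul_mul_mem_closure {S : Set G} {u : G}
    (hS : ∀ s ∈ S, u⁻¹ * s⁻¹ * u * s ∈ closure S) {g : G} (hg : g ∈ closure S) :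
    u⁻¹ * g * u ∈ closure S := by
  have : closure S ≤ (closure S).comap (MulAut.conj u⁻¹).toMonoidHom := by
    refine (closure_le _).mpr fun s hs => ?_
    change u⁻¹ * s * u⁻¹⁻¹ ∈ closure S
    rw [inv_inv, inv_mul_mul_eq_mul_inv_of_commutator_eq rfl]
    exact mul_mem (subset_closure hs) (inv_mem (hS s hs))
  simpa using this hg

variable {g : G} {n : ℕ}

theorem pow_zmod_val_natCast (hg : g ^ n = 1) (m : ℕ) : g ^ (m : ZMod n).val = g ^ m := by
  rw [ZMod.val_natCast, ← pow_eq_pow_mod m hg]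

theorem pow_zmod_val_intCast [NeZero n] (hg : g ^ n = 1) (m : ℤ) :
    g ^ (m : ZMod n).val = g ^ m := by
  rw [← zpow_natCast, ZMod.val_intCast, ← zpow_eq_zpow_emod' m hg]

theorem pow_zmod_val_add [NeZero n] (hg : g ^ n = 1) (a b : ZMod n) :
    g ^ (a + b).val = g ^ a.val * g ^ b.val := by
  rw [ZMod.val_add, ← pow_eq_pow_mod _ hg, pow_add]

theorem pow_zmod_val_sub [NeZero n] (hg : g ^ n = 1) (a b : ZMod n) :
    g ^ (a - b).val = g ^ a.val * (g ^ b.val)⁻¹ := by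
  have : a - b = ((a.val - b.val : ℤ) : ZMod n) := by simp
  rw [this, pow_zmod_val_intCast hg, zpow_sub, zpow_natCast, zpow_natCast]

end GroupLemmas

section PowProd

variable {G ι : Type*} [Group G] {n : ℕ} {g : ι → G}

theorem pairwise_commute_pow (hg : Pairwise fun i j => Commute (g i) (g j)) (s : Finset ι)
    (e : ι → ℕ) : (s : Set ι).Pairwise (Function.onFun Commute fun i => g i ^ e i) :=
  fun _ _ _ _ hij => (hg hij).pow_pow _ _

variable [Fintype ι]

def powProd (g : ι → G) (hg : Pairwise fun i j => Commute (g i) (g j)) (e : ι → ZMod n) : G :=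
  Finset.univ.noncommProd (fun i => g i ^ (e i).val) (pairwise_commute_pow hg _ _)

variable (hg : Pairwise fun i j => Commute (g i) (g j))

theorem powProd_add [NeZero n] (hgn : ∀ i, g i ^ n = 1) (e e' : ι → ZMod n) :
    powProd g hg (e + e') = powProd g hg e * powProd g hg e' := by
  rw [powProd, powProd, powProd, ← Finset.noncommProd_mul_distrib]
  · exact Finset.noncommProd_congr rfl (fun i _ => pow_zmod_val_add (hgn i) _ _) _
  · exact fun _ _ _ _ hij => (hg hij).pow_pow _ _

theorem powProd_single [DecidableEq ι] (i : ι) (c : ZMod n) :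
    powProd g hg (Pi.single i c) = g i ^ c.val := by
  rw [powProd, ← Finset.mul_noncommProd_erase _ (Finset.mem_univ i) _ _
    (pairwise_commute_pow hg _ _), Finset.noncommProd_eq_pow_card _ _ _ 1, one_pow, mul_one,
    Pi.single_eq_same]
  intro j hj
  rw [Pi.single_eq_of_ne (Finset.ne_of_mem_erase hj), ZMod.val_zero, pow_zero]

theorem powProd_add_single [Fact (1 < n)] [DecidableEq ι] (hgn : ∀ i, g i ^ n = 1)
    (e : ι → ZMod n) (i : ι) : powProd g hg (e + Pi.single i 1) = powProd g hg e * g i := by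
  rw [powProd_add hg hgn, powProd_single hg, ZMod.val_one, pow_one]

theorem powProd_zero : powProd g hg (0 : ι → ZMod n) = 1 := by
  rw [powProd, Finset.noncommProd_eq_pow_card _ _ _ 1 (fun i _ => by simp), one_pow]

theorem Commute.powProd_right {a : G} {e : ι → ZMod n} (h : ∀ i, Commute a (g i ^ (e i).val)) :
    Commute a (powProd g hg e) :=
  Finset.noncommProd_commute _ _ _ _ fun i _ => h i

theorem powProd_mem {H : Subgroup G} (h : ∀ i, g i ∈ H) (e : ι → ZMod n) :
    powProd g hg e ∈ H :=
  Subgroup.noncommProd_mem _ _ fun i _ => pow_mem (h i) _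

end PowProd

section Hyperplanes

open Module Submodule
open scoped LinearAlgebra.Projectivization

variable {K V : Type*} [Field K] [AddCommGroup V] [Module K V]

theorem Module.Dual.isCoatom_ker {f : Dual K V} (hf : f ≠ 0) : IsCoatom (LinearMap.ker f) :=
  LinearMap.isCoatom_ker_of_surjective <|
    LinearMap.range_eq_top.mp (Dual.range_eq_top_of_ne_zero hf)

variable [FiniteDimensional K V]

theorem Submodule.exists_dual_ker_eq_of_isCoatom {W : Submodule K V} (hW : IsCoatom W) :
    ∃ f : Dual K V, f ≠ 0 ∧ LinearMap.ker f = W := by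
  obtain ⟨f, hf, hfW⟩ := W.exists_dual_map_eq_bot_of_lt_top hW.lt_top inferInstance
  exact ⟨f, hf, (hW.le_iff.mp (LinearMap.le_ker_iff_map.mpr hfW)).resolve_left
    (Dual.isCoatom_ker hf).ne_top⟩

theorem Module.Dual.exists_smul_eq_of_ker_eq {f g : Dual K V} (hf : f ≠ 0)
    (h : LinearMap.ker f = LinearMap.ker g) : ∃ a : Kˣ, a • g = f := by
  obtain ⟨x, hx⟩ : ∃ x, f x ≠ 0 := by simpa [DFunLike.ext_iff] using hf
  have hgx : g x ≠ 0 := fun h0 => hx (by rwa [← LinearMap.mem_ker, h])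
  refine ⟨Units.mk0 (f x / g x) (div_ne_zero hx hgx),
    (Dual.eq_of_ker_eq_of_apply_eq x ?_ ?_ hx).symm⟩
  · rw [h, Units.smul_def, LinearMap.ker_smul _ _ (Units.ne_zero _)]
  · simp [hgx]

theorem Submodule.ncard_setOf_isCoatom [Finite K] :
    {W : Submodule K V | IsCoatom W}.ncard =
      (Nat.card K ^ finrank K V - 1) / (Nat.card K - 1) := by
  let ker : ℙ K (Dual K V) → Submodule K V :=
    Projectivization.lift (fun f => LinearMap.ker (f : Dual K V)) <| by
      rintro ⟨-, hf⟩ ⟨g, -⟩ t rfl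
      exact LinearMap.ker_smul g t (by rintro rfl; simp at hf)
  have hker : Function.Injective ker := by
    intro f g
    induction f using Projectivization.ind with | h f hf => ?_
    induction g using Projectivization.ind with | h g hg => ?_
    intro h
    exact (Projectivization.mk_eq_mk_iff K f g hf hg).mpr (Dual.exists_smul_eq_of_ker_eq hf h)
  have hrange : Set.range ker = {W | IsCoatom W} := by
    ext W
    constructor
    · rintro ⟨f, rfl⟩
      induction f using Projectivization.ind with | h f hf => exact Dual.isCoatom_ker hf
    · intro hW
      obtain ⟨f, hf, rfl⟩ := exists_dual_ker_eq_of_isCoatom hW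
      exact ⟨Projectivization.mk K f hf, rfl⟩
  rw [← hrange, ← Set.image_univ, Set.ncard_image_of_injective _ hker, Set.ncard_univ,
    Projectivization.card'', Module.natCard_eq_pow_finrank (K := K), Subspace.dual_finrank_eq]

theorem Submodule.ncard_setOf_isCoatom_le [Finite K] (U : Submodule K V) :
    {W | IsCoatom W ∧ U ≤ W}.ncard =
      (Nat.card K ^ (finrank K V - finrank K U) - 1) / (Nat.card K - 1) := by
  have hcomap : {W | IsCoatom W ∧ U ≤ W} = comap U.mkQ '' {W' | IsCoatom W'} := by
    ext W
    constructor
    · rintro ⟨hW, hUW⟩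
      have hW' : comap U.mkQ (map U.mkQ W) = W := by rw [comap_map_mkQ, sup_eq_right.mpr hUW]
      refine ⟨map U.mkQ W, ?_, hW'⟩
      rwa [Set.mem_ofPred_eq, ← isCoatom_comap_iff U.mkQ_surjective, hW']
    · rintro ⟨W', hW', rfl⟩
      exact ⟨(isCoatom_comap_iff U.mkQ_surjective).mpr hW', fun u hu => by
        simp [(Quotient.mk_eq_zero U).mpr hu]⟩
  rw [hcomap, Set.ncard_image_of_injective _ (comap_injective_of_surjective U.mkQ_surjective),
    ncard_setOf_isCoatom, finrank_quotient]

theorem Submodule.ncard_setOf_isCoatom_exists_le [Finite K] {α : Type*} (J : Finset α)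
    (U : α → Submodule K V) {m : ℕ} (hU : ∀ j ∈ J, finrank K (U j) = m)
    (hsup : (J : Set α).Pairwise fun i j => U i ⊔ U j = ⊤) :
    {W | IsCoatom W ∧ ∃ j ∈ J, U j ≤ W}.ncard =
      J.card * ((Nat.card K ^ (finrank K V - m) - 1) / (Nat.card K - 1)) := by
  have : Finite V := Module.finite_of_finite K
  have : Finite (Submodule K V) := Finite.of_injective _ SetLike.coe_injective
  have hunion : {W | IsCoatom W ∧ ∃ j ∈ J, U j ≤ W} =
      ⋃ j ∈ (J : Set α), {W | IsCoatom W ∧ U j ≤ W} := by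
    ext W
    simp
  have hdisj : (J : Set α).PairwiseDisjoint fun j => {W | IsCoatom W ∧ U j ≤ W} := by
    intro i hi j hj hij
    refine Set.disjoint_left.mpr fun W ⟨hW, hiW⟩ ⟨_, hjW⟩ => hW.ne_top ?_
    rw [eq_top_iff, ← hsup hi hj hij]
    exact sup_le hiW hjW
  rw [hunion, J.finite_toSet.ncard_biUnion (fun _ _ => Set.toFinite _) hdisj,
    finsum_mem_coe_finset,
    Finset.sum_congr rfl fun j hj => by rw [ncard_setOf_isCoatom_le, hU j hj],
    Finset.sum_const, smul_eq_mul]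

end Hyperplanes

theorem Submodule.isCoatom_iff_exists_zsmul {p : ℕ} [Fact p.Prime] {V : Type*} [AddCommGroup V]
    [Module (ZMod p) V] {W : Submodule (ZMod p) V} :
    IsCoatom W ↔ W ≠ ⊤ ∧ ∃ v₀, ∀ u, ∃ m : ℤ, u - m • v₀ ∈ W := by
  have hcast (m : ℤ) (v : V) : m • v = (m : ZMod p) • v := (Int.cast_smul_eq_zsmul _ m v).symm
  constructor
  · intro hW
    obtain ⟨v₀, -, hv₀⟩ := SetLike.exists_of_lt hW.lt_top
    refine ⟨hW.ne_top, v₀, fun u => ?_⟩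
    have hsup : W ⊔ span (ZMod p) {v₀} = ⊤ :=
      hW.2 _ (left_lt_sup.mpr fun h => hv₀ (h (mem_span_singleton_self v₀)))
    obtain ⟨w, hw, _, hy, rfl⟩ := mem_sup.mp (hsup ▸ mem_top : u ∈ W ⊔ span (ZMod p) {v₀})
    obtain ⟨c, rfl⟩ := mem_span_singleton.mp hy
    exact ⟨c.val, by simpa [hcast] using hw⟩
  · rintro ⟨hW, v₀, hv₀⟩
    refine ⟨hW, fun W' hWW' => eq_top_iff.mpr fun u _ => ?_⟩
    obtain ⟨u', hu'W', hu'W⟩ := SetLike.exists_of_lt hWW'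
    obtain ⟨m', hm'⟩ := hv₀ u'
    have hm'W' : (m' : ZMod p) • v₀ ∈ W' := by
      simpa [hcast] using W'.sub_mem hu'W' (hWW'.le hm')
    have hm'0 : (m' : ZMod p) ≠ 0 := fun h0 => hu'W (by simpa [hcast, h0] using hm')
    have hv₀W' : v₀ ∈ W' := by
      simpa [smul_smul, inv_mul_cancel₀ hm'0] using W'.smul_mem (m' : ZMod p)⁻¹ hm'W'
    obtain ⟨m, hm⟩ := hv₀ u
    simpa [hcast] using W'.add_mem (hWW'.le hm) (W'.smul_mem (m : ZMod p) hv₀W')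

section SMulGraph

variable {K M : Type*} [Field K] [AddCommGroup M] [Module K M]

def smulGraph (t : K) : Submodule K (M × M) :=
  LinearMap.range ((t • LinearMap.id).prod LinearMap.id)

theorem mem_smulGraph {t : K} {u : M × M} : u ∈ smulGraph t ↔ u.1 = t • u.2 := by
  constructor
  · rintro ⟨w, rfl⟩
    simp
  · intro h
    exact ⟨u.2, by ext <;> simp [h]⟩

theorem finrank_smulGraph (t : K) :
    Module.finrank K (smulGraph (M := M) t) = Module.finrank K M :=
  LinearMap.finrank_range_of_inj fun _ _ h => congrArg Prod.snd h

theorem smulGraph_sup_smulGraph {t s : K} (h : t ≠ s) :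
    smulGraph (M := M) t ⊔ smulGraph s = ⊤ := by
  refine eq_top_iff.mpr fun u _ => Submodule.mem_sup.mpr ?_
  set a := (t - s)⁻¹ • (u.1 - s • u.2)
  refine ⟨(t • a, a), mem_smulGraph.mpr rfl, (s • (u.2 - a), u.2 - a), mem_smulGraph.mpr rfl, ?_⟩
  have hts : t - s ≠ 0 := sub_ne_zero.mpr h
  ext
  · calc t • a + s • (u.2 - a) = (t - s) • a + s • u.2 := by module
      _ = u.1 := by simp [a, smul_smul, mul_inv_cancel₀ hts]
  · simp

theorem smulGraph_le_iff {ι : Type*} [Fintype ι] [DecidableEq ι] {t : K}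
    {W : Submodule K ((ι → K) × (ι → K))} :
    smulGraph t ≤ W ↔ ∀ i, (Pi.single i t, Pi.single i 1) ∈ W := by
  constructor
  · intro h i
    exact h (mem_smulGraph.mpr (by simp [← Pi.single_smul]))
  · intro h
    rw [smulGraph, LinearMap.range_le_iff_comap, eq_top_iff, ← (Pi.basisFun K ι).span_eq,
      Submodule.span_le]
    rintro _ ⟨i, rfl⟩
    simpa [← Pi.single_smul] using h i

end SMulGraph

namespace Paper

variable {G H : Type*} [Group G] [Group H]

theorem normalIn_map_iff {ψ : H →* G} (hψ : Function.Injective ψ) {A B : Subgroup H} :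
    NormalIn (A.map ψ) (B.map ψ) ↔ NormalIn A B := by
  constructor
  · intro h a ha b hb
    have := h (ψ a) ⟨a, ha, rfl⟩ (ψ b) ⟨b, hb, rfl⟩
    rwa [← map_inv, ← map_mul, ← map_mul, Subgroup.mem_map_iff_mem hψ] at this
  · rintro h _ ⟨a, ha, rfl⟩ _ ⟨b, hb, rfl⟩
    simpa [← map_inv, ← map_mul] using Subgroup.mem_map_of_mem ψ (h a ha b hb)

theorem cyclicQuot_map_iff {ψ : H →* G} (hψ : Function.Injective ψ) {A B : Subgroup H} :
    CyclicQuot (A.map ψ) (B.map ψ) ↔ CyclicQuot A B := by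
  constructor
  · rintro ⟨_, ⟨h, hh, rfl⟩, hgen⟩
    refine ⟨h, hh, fun g hg => ?_⟩
    obtain ⟨m, hm⟩ := hgen (ψ g) ⟨g, hg, rfl⟩
    exact ⟨m, by simpa [← map_zpow, ← map_inv, ← map_mul, Subgroup.mem_map_iff_mem hψ] using hm⟩
  · rintro ⟨h, hh, hgen⟩
    refine ⟨ψ h, ⟨h, hh, rfl⟩, ?_⟩
    rintro _ ⟨g, hg, rfl⟩
    obtain ⟨m, hm⟩ := hgen g hg
    exact ⟨m, by simpa [← map_zpow, ← map_inv, ← map_mul] using Subgroup.mem_map_of_mem ψ hm⟩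

theorem setOf_cyclicQuot_range_eq_image {ψ : H →* G} (hψ : Function.Injective ψ) :
    {K | K ≤ ψ.range ∧ K ≠ ψ.range ∧ NormalIn ψ.range K ∧ CyclicQuot ψ.range K} =
      Subgroup.map ψ '' {K | K ≠ ⊤ ∧ NormalIn ⊤ K ∧ CyclicQuot ⊤ K} := by
  ext K
  rw [MonoidHom.range_eq_map]
  constructor
  · rintro ⟨hle, hne, hN, hC⟩
    have hK : (K.comap ψ).map ψ = K := Subgroup.map_comap_eq_self (ψ.range_eq_map ▸ hle)
    rw [← hK] at hne hN hC
    exact ⟨K.comap ψ, ⟨fun h => hne (h ▸ rfl), (normalIn_map_iff hψ).mp hN,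
      (cyclicQuot_map_iff hψ).mp hC⟩, hK⟩
  · rintro ⟨K, ⟨hne, hN, hC⟩, rfl⟩
    exact ⟨Subgroup.map_mono le_top, (Subgroup.map_injective hψ).ne hne,
      (normalIn_map_iff hψ).mpr hN, (cyclicQuot_map_iff hψ).mpr hC⟩

theorem commutator_mem_of_cyclicQuot_top {K : Subgroup G} (hN : NormalIn ⊤ K)
    (hC : CyclicQuot ⊤ K) (u v : G) : u⁻¹ * v⁻¹ * u * v ∈ K := by
  have : K.Normal := ⟨fun k hk g => by simpa using hN g⁻¹ trivial k hk⟩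
  obtain ⟨h, -, hgen⟩ := hC
  have hpow (g : G) : ∃ m : ℤ, (g : G ⧸ K) = (h : G ⧸ K) ^ m := by
    obtain ⟨m, hm⟩ := hgen g trivial
    exact ⟨m, by rw [← QuotientGroup.mk_zpow, eq_comm, QuotientGroup.eq]; exact hm⟩
  obtain ⟨m, hm⟩ := hpow u
  obtain ⟨l, hl⟩ := hpow v
  rw [← QuotientGroup.eq_one_iff, QuotientGroup.mk_mul, QuotientGroup.mk_mul,
    QuotientGroup.mk_mul, QuotientGroup.mk_inv, QuotientGroup.mk_inv, hm, hl]
  group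

end Paper

/-- `⟨c, (a, b)⟩` stands for the word `x ^ c * ∏ yᵢ ^ aᵢ * ∏ zᵢ ^ bᵢ`; moving the `zᵢ ^ bᵢ` of the
left factor past the `yᵢ ^ a'ᵢ` of the right one costs `x ^ (-b ⬝ᵥ a')`. -/
@[ext]
structure Heisenberg (R ι : Type*) where
  c : R
  v : (ι → R) × (ι → R)

namespace Heisenberg

variable {R ι : Type*}

def equivProd : Heisenberg R ι ≃ R × (ι → R) × (ι → R) where
  toFun s := (s.c, s.v)
  invFun t := ⟨t.1, t.2⟩
  left_inv _ := rfl
  right_inv _ := rfl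

instance [Finite R] [Finite ι] : Finite (Heisenberg R ι) := Finite.of_equiv _ equivProd.symm

theorem card_eq [Finite ι] : Nat.card (Heisenberg R ι) = Nat.card R ^ (2 * Nat.card ι + 1) := by
  rw [Nat.card_congr equivProd, Nat.card_prod, Nat.card_prod, Nat.card_fun]
  ring

variable [CommRing R]

instance : One (Heisenberg R ι) := ⟨⟨0, 0⟩⟩

@[simp] theorem one_c : (1 : Heisenberg R ι).c = 0 := rfl
@[simp] theorem one_v : (1 : Heisenberg R ι).v = 0 := rfl

variable [Fintype ι]

instance : Mul (Heisenberg R ι) := ⟨fun s t => ⟨s.c + t.c - s.v.2 ⬝ᵥ t.v.1, s.v + t.v⟩⟩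

instance : Inv (Heisenberg R ι) := ⟨fun s => ⟨-s.c - s.v.2 ⬝ᵥ s.v.1, -s.v⟩⟩

@[simp] theorem mul_c (s t : Heisenberg R ι) : (s * t).c = s.c + t.c - s.v.2 ⬝ᵥ t.v.1 := rfl
@[simp] theorem mul_v (s t : Heisenberg R ι) : (s * t).v = s.v + t.v := rfl
@[simp] theorem inv_c (s : Heisenberg R ι) : s⁻¹.c = -s.c - s.v.2 ⬝ᵥ s.v.1 := rfl
@[simp] theorem inv_v (s : Heisenberg R ι) : s⁻¹.v = -s.v := rfl

instance : Group (Heisenberg R ι) :=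
  Group.ofLeftAxioms
    (fun s t u => by ext <;> simp [add_dotProduct, dotProduct_add] <;> ring)
    (fun s => by ext <;> simp)
    (fun s => by ext <;> simp; ring)

@[simp] theorem pow_v (s : Heisenberg R ι) (m : ℕ) : (s ^ m).v = m • s.v := by
  induction m with
  | zero => simp
  | succ m ih => rw [pow_succ, mul_v, ih, succ_nsmul]

@[simp] theorem zpow_v (s : Heisenberg R ι) (m : ℤ) : (s ^ m).v = m • s.v := by
  cases m with
  | ofNat m => simp
  | negSucc m => rw [zpow_negSucc, inv_v, pow_v, negSucc_zsmul]

theorem pow_eq_of_dotProduct_eq_zero {s : Heisenberg R ι} (hs : s.v.2 ⬝ᵥ s.v.1 = 0) (m : ℕ) :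
    s ^ m = ⟨m • s.c, m • s.v⟩ := by
  induction m with
  | zero => ext <;> simp
  | succ m ih =>
    rw [pow_succ, ih]
    refine Heisenberg.ext ?_ ?_
    · simp only [mul_c, Prod.smul_snd, smul_dotProduct, hs, smul_zero, sub_zero, succ_nsmul]
    · simp only [mul_v, succ_nsmul]

theorem eq_mk_zero_mul (s : Heisenberg R ι) : s = ⟨s.c, 0⟩ * ⟨0, s.v⟩ := by
  ext <;> simp

def subgroupOfSubmodule (W : Submodule R ((ι → R) × (ι → R))) : Subgroup (Heisenberg R ι) where
  carrier := {t | t.v ∈ W}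
  mul_mem' := W.add_mem
  one_mem' := W.zero_mem
  inv_mem' := W.neg_mem

theorem mem_subgroupOfSubmodule {W : Submodule R ((ι → R) × (ι → R))} {t : Heisenberg R ι} :
    t ∈ subgroupOfSubmodule W ↔ t.v ∈ W :=
  Iff.rfl

theorem subgroupOfSubmodule_injective :
    Function.Injective (subgroupOfSubmodule (R := R) (ι := ι)) := fun _ _ h => by
  ext u
  exact SetLike.ext_iff.mp h ⟨0, u⟩

theorem normalIn_subgroupOfSubmodule (W : Submodule R ((ι → R) × (ι → R))) :
    Paper.NormalIn ⊤ (subgroupOfSubmodule W) := fun _ _ t ht => by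
  simpa [mem_subgroupOfSubmodule] using ht

def x : Heisenberg R ι := ⟨1, 0⟩

theorem mk_zero_eq_x_pow {n : ℕ} [NeZero n] (c : ZMod n) :
    (⟨c, 0⟩ : Heisenberg (ZMod n) ι) = x ^ c.val := by
  rw [pow_eq_of_dotProduct_eq_zero (by simp [x])]
  simp [x]

theorem isCoatom_iff_cyclicQuot {p : ℕ} [Fact p.Prime]
    {W : Submodule (ZMod p) ((ι → ZMod p) × (ι → ZMod p))} :
    IsCoatom W ↔ subgroupOfSubmodule W ≠ ⊤ ∧ Paper.CyclicQuot ⊤ (subgroupOfSubmodule W) := by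
  have hne : subgroupOfSubmodule W ≠ ⊤ ↔ W ≠ ⊤ :=
    subgroupOfSubmodule_injective.ne_iff' (by ext; simp [mem_subgroupOfSubmodule])
  rw [Submodule.isCoatom_iff_exists_zsmul, hne]
  refine and_congr_right fun _ => ⟨fun ⟨v₀, hv₀⟩ => ⟨⟨0, v₀⟩, trivial, fun g _ => ?_⟩,
    fun ⟨h, _, hh⟩ => ⟨h.v, fun u => ?_⟩⟩
  · obtain ⟨m, hm⟩ := hv₀ g.v
    exact ⟨m, by simpa [mem_subgroupOfSubmodule, neg_add_eq_sub] using hm⟩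
  · obtain ⟨m, hm⟩ := hh ⟨0, u⟩ trivial
    exact ⟨m, by simpa [mem_subgroupOfSubmodule, neg_add_eq_sub] using hm⟩

variable [DecidableEq ι]

def y (i : ι) : Heisenberg R ι := ⟨0, (Pi.single i 1, 0)⟩

def z (i : ι) : Heisenberg R ι := ⟨0, (0, Pi.single i 1)⟩

theorem commutator_y_z (i : ι) : (y i)⁻¹ * (z i)⁻¹ * y i * z i = (x : Heisenberg R ι) := by
  ext <;> simp [x, y, z]

theorem closure_x_y_z {n : ℕ} [NeZero n] :
    Subgroup.closure ({x} ∪ Set.range y ∪ Set.range z) =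
      (⊤ : Subgroup (Heisenberg (ZMod n) ι)) := by
  set H := Subgroup.closure ({x} ∪ Set.range y ∪ Set.range z : Set (Heisenberg (ZMod n) ι))
  have hx : (x : Heisenberg (ZMod n) ι) ∈ H := Subgroup.subset_closure (by simp)
  have hy (i : ι) : y i ∈ H := Subgroup.subset_closure (by simp)
  have hz (i : ι) : z i ∈ H := Subgroup.subset_closure (by simp)
  have h1 (β : ι → ZMod n) : (⟨0, (β, 0)⟩ : Heisenberg (ZMod n) ι) ∈ H := by
    rw [← Finset.univ_sum_single β]
    refine Finset.sum_induction _ (fun β => (⟨0, (β, 0)⟩ : Heisenberg (ZMod n) ι) ∈ H)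
      (fun a b ha hb => by convert H.mul_mem ha hb using 1; ext <;> simp) H.one_mem
      (fun i _ => ?_)
    convert H.pow_mem (hy i) (β i).val using 1
    rw [pow_eq_of_dotProduct_eq_zero (by simp [y])]
    ext <;> simp [y, ← Pi.single_smul]
  have h2 (γ : ι → ZMod n) : (⟨0, (0, γ)⟩ : Heisenberg (ZMod n) ι) ∈ H := by
    rw [← Finset.univ_sum_single γ]
    refine Finset.sum_induction _ (fun γ => (⟨0, (0, γ)⟩ : Heisenberg (ZMod n) ι) ∈ H)
      (fun a b ha hb => by convert H.mul_mem ha hb using 1; ext <;> simp) H.one_mem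
      (fun i _ => ?_)
    convert H.pow_mem (hz i) (γ i).val using 1
    rw [pow_eq_of_dotProduct_eq_zero (by simp [z])]
    ext <;> simp [z, ← Pi.single_smul]
  refine eq_top_iff.mpr fun s _ => ?_
  have : s = ⟨s.c, 0⟩ * ⟨0, (s.v.1, 0)⟩ * ⟨0, (0, s.v.2)⟩ := by ext <;> simp
  rw [this, mk_zero_eq_x_pow]
  exact H.mul_mem (H.mul_mem (H.pow_mem hx _) (h1 _)) (h2 _)

variable {p : ℕ} [Fact p.Prime]

theorem exists_subgroupOfSubmodule_eq [Nonempty ι] {K : Subgroup (Heisenberg (ZMod p) ι)}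
    (hN : Paper.NormalIn ⊤ K) (hC : Paper.CyclicQuot ⊤ K) : ∃ W, subgroupOfSubmodule W = K := by
  obtain ⟨i⟩ := ‹Nonempty ι›
  have hx : x ∈ K :=
    commutator_y_z (R := ZMod p) i ▸ Paper.commutator_mem_of_cyclicQuot_top hN hC _ _
  have hmem (t : Heisenberg (ZMod p) ι) : t ∈ K ↔ ⟨0, t.v⟩ ∈ K := by
    conv_lhs => rw [eq_mk_zero_mul t, mk_zero_eq_x_pow]
    exact Subgroup.mul_mem_cancel_left _ (K.pow_mem hx _)
  refine ⟨{ carrier := {u | (⟨0, u⟩ : Heisenberg (ZMod p) ι) ∈ K}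
            add_mem' := fun hu hu' => (hmem _).mp (K.mul_mem hu hu')
            zero_mem' := K.one_mem
            smul_mem' := fun c u hu => ?_ }, ?_⟩
  · have := (hmem _).mp (K.pow_mem hu c.val)
    rwa [pow_v, ← Nat.cast_smul_eq_nsmul (ZMod p), ZMod.natCast_zmod_val] at this
  · ext t
    exact (hmem t).symm

theorem setOf_cyclicQuot_eq_image [Nonempty ι] :
    {K : Subgroup (Heisenberg (ZMod p) ι) | K ≠ ⊤ ∧ Paper.NormalIn ⊤ K ∧ Paper.CyclicQuot ⊤ K} =
      subgroupOfSubmodule '' {W | IsCoatom W} := by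
  ext K
  constructor
  · rintro ⟨hne, hN, hC⟩
    obtain ⟨W, rfl⟩ := exists_subgroupOfSubmodule_eq hN hC
    exact ⟨W, isCoatom_iff_cyclicQuot.mpr ⟨hne, hC⟩, rfl⟩
  · rintro ⟨W, hW, rfl⟩
    obtain ⟨hne, hC⟩ := isCoatom_iff_cyclicQuot.mp hW
    exact ⟨hne, normalIn_subgroupOfSubmodule W, hC⟩

end Heisenberg

namespace Paper.GData

variable {G : Type*} [Group G] [Fintype G] (d : GData G)

instance : Fact d.p.Prime := ⟨d.hp⟩

instance : Fact (1 < d.p) := ⟨d.hp.one_lt⟩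

theorem x_mem_P : d.x ∈ d.P := Subgroup.subset_closure (by simp)

theorem y_mem_P (i : Fin d.r) : d.y i ∈ d.P := Subgroup.subset_closure (by simp)

theorem z_mem_P (i : Fin d.r) : d.z i ∈ d.P := Subgroup.subset_closure (by simp)

theorem commute_x_of_mem_P {g : G} (hg : g ∈ d.P) : Commute d.x g := by
  have : d.P ≤ Subgroup.centralizer {d.x} := by
    refine (Subgroup.closure_le _).mpr ?_
    rintro _ ((rfl | ⟨i, rfl⟩) | ⟨i, rfl⟩) <;>
      rw [SetLike.mem_coe, Subgroup.mem_centralizer_singleton_iff]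
    · exact (commute_of_commutator_eq_one (d.hxy i)).eq.symm
    · exact (commute_of_commutator_eq_one (d.hxz i)).eq.symm
  exact (Subgroup.mem_centralizer_singleton_iff.mp (this hg)).symm

theorem pairwise_commute_y : Pairwise fun i j => Commute (d.y i) (d.y j) :=
  fun i j _ => commute_of_commutator_eq_one (d.hyy i j)

theorem pairwise_commute_z : Pairwise fun i j => Commute (d.z i) (d.z j) :=
  fun i j _ => commute_of_commutator_eq_one (d.hzz i j)

def yPow : (Fin d.r → ZMod d.p) → G := powProd d.y d.pairwise_commute_y

def zPow : (Fin d.r → ZMod d.p) → G := powProd d.z d.pairwise_commute_z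

theorem yPow_mem_P (β : Fin d.r → ZMod d.p) : d.yPow β ∈ d.P := powProd_mem _ d.y_mem_P β

theorem zPow_mem_P (γ : Fin d.r → ZMod d.p) : d.zPow γ ∈ d.P := powProd_mem _ d.z_mem_P γ

theorem y_inv_mul_zPow_mul_y (i : Fin d.r) (γ : Fin d.r → ZMod d.p) :
    (d.y i)⁻¹ * d.zPow γ * d.y i = d.zPow γ * (d.x ^ (γ i).val)⁻¹ := by
  have hsplit : d.zPow γ = d.zPow (γ - Pi.single i (γ i)) * d.z i ^ (γ i).val := by
    rw [zPow, ← powProd_single d.pairwise_commute_z i, ← powProd_add _ d.hzp, sub_add_cancel]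
  set A := d.zPow (γ - Pi.single i (γ i))
  have hA : Commute (d.y i) A := by
    refine Commute.powProd_right _ fun j => ?_
    rcases eq_or_ne j i with rfl | hji
    · simp
    · exact (commute_of_commutator_eq_one (d.hyz' i j hji.symm)).pow_right _
  have hpow :
      (d.y i)⁻¹ * d.z i ^ (γ i).val * d.y i = d.z i ^ (γ i).val * (d.x ^ (γ i).val)⁻¹ := by
    have := conj_pow (a := (d.y i)⁻¹) (b := d.z i) (i := (γ i).val)
    rwa [inv_inv, inv_mul_mul_eq_mul_inv_of_commutator_eq (d.hyz i),
      ((d.commute_x_of_mem_P (d.z_mem_P i)).symm.inv_right).mul_pow, inv_pow, eq_comm] at this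
  rw [hsplit, mul_assoc A, ← hpow, ← mul_assoc, ← mul_assoc, hA.inv_left.eq]
  group

def heisenbergFun (t : Heisenberg (ZMod d.p) (Fin d.r)) : G :=
  d.x ^ t.c.val * d.yPow t.v.1 * d.zPow t.v.2

theorem heisenbergFun_one : d.heisenbergFun 1 = 1 := by
  simp [heisenbergFun, yPow, zPow, powProd_zero]

theorem heisenbergFun_mul_x (t : Heisenberg (ZMod d.p) (Fin d.r)) :
    d.heisenbergFun (t * Heisenberg.x) = d.heisenbergFun t * d.x := by
  have ht : t * Heisenberg.x = ⟨t.c + 1, t.v⟩ := by ext <;> simp [Heisenberg.x]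
  have hx := d.commute_x_of_mem_P (mul_mem (d.yPow_mem_P t.v.1) (d.zPow_mem_P t.v.2))
  simp only [ht, heisenbergFun]
  rw [pow_zmod_val_add d.hxp, ZMod.val_one, pow_one, mul_assoc (d.x ^ t.c.val), mul_assoc,
    mul_assoc, mul_assoc, hx.eq]
  group

theorem heisenbergFun_mul_y (t : Heisenberg (ZMod d.p) (Fin d.r)) (i : Fin d.r) :
    d.heisenbergFun (t * Heisenberg.y i) = d.heisenbergFun t * d.y i := by
  obtain ⟨c, β, γ⟩ := t
  have ht : (⟨c, β, γ⟩ * Heisenberg.y i : Heisenberg (ZMod d.p) (Fin d.r)) =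
      ⟨c - γ i, β + Pi.single i 1, γ⟩ := by
    ext <;> simp [Heisenberg.y]
  have hcomm : Commute (d.x ^ (γ i).val)⁻¹ (d.yPow β * d.y i * d.zPow γ) :=
    ((d.commute_x_of_mem_P (mul_mem (mul_mem (d.yPow_mem_P β) (d.y_mem_P i))
      (d.zPow_mem_P γ))).pow_left _).inv_left
  simp only [ht, heisenbergFun]
  rw [pow_zmod_val_sub d.hxp, yPow, powProd_add_single _ d.hyp, ← yPow]
  calc d.x ^ c.val * (d.x ^ (γ i).val)⁻¹ * (d.yPow β * d.y i) * d.zPow γ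
      = d.x ^ c.val * ((d.x ^ (γ i).val)⁻¹ * (d.yPow β * d.y i * d.zPow γ)) := by group
    _ = d.x ^ c.val * (d.yPow β * d.y i * (d.zPow γ * (d.x ^ (γ i).val)⁻¹)) := by
      rw [hcomm.eq]; group
    _ = d.x ^ c.val * d.yPow β * d.zPow γ * d.y i := by
      rw [← y_inv_mul_zPow_mul_y]; group

theorem heisenbergFun_mul_z (t : Heisenberg (ZMod d.p) (Fin d.r)) (i : Fin d.r) :
    d.heisenbergFun (t * Heisenberg.z i) = d.heisenbergFun t * d.z i := by
  have ht : t * Heisenberg.z i = ⟨t.c, t.v.1, t.v.2 + Pi.single i 1⟩ := by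
    ext <;> simp [Heisenberg.z]
  simp only [ht, heisenbergFun]
  rw [zPow, powProd_add_single _ d.hzp, ← zPow, ← mul_assoc]

theorem heisenbergFun_x : d.heisenbergFun Heisenberg.x = d.x := by
  simpa [heisenbergFun_one] using d.heisenbergFun_mul_x 1

theorem heisenbergFun_y (i : Fin d.r) : d.heisenbergFun (Heisenberg.y i) = d.y i := by
  simpa [heisenbergFun_one] using d.heisenbergFun_mul_y 1 i

theorem heisenbergFun_z (i : Fin d.r) : d.heisenbergFun (Heisenberg.z i) = d.z i := by
  simpa [heisenbergFun_one] using d.heisenbergFun_mul_z 1 i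

def heisenbergHom : Heisenberg (ZMod d.p) (Fin d.r) →* G :=
  MonoidHom.mk' d.heisenbergFun <| map_mul_of_map_mul_right Heisenberg.closure_x_y_z
    d.heisenbergFun_one <| by
      rintro t _ ((rfl | ⟨i, rfl⟩) | ⟨i, rfl⟩)
      · rw [heisenbergFun_mul_x, heisenbergFun_x]
      · rw [heisenbergFun_mul_y, heisenbergFun_y]
      · rw [heisenbergFun_mul_z, heisenbergFun_z]

theorem range_heisenbergHom : d.heisenbergHom.range = d.P := by
  rw [MonoidHom.range_eq_map, ← Heisenberg.closure_x_y_z, MonoidHom.map_closure, Set.image_union,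
    Set.image_union, Set.image_singleton, ← Set.range_comp, ← Set.range_comp]
  have hy : d.heisenbergHom ∘ Heisenberg.y = d.y := funext d.heisenbergFun_y
  have hz : d.heisenbergHom ∘ Heisenberg.z = d.z := funext d.heisenbergFun_z
  rw [hy, hz, show d.heisenbergHom Heisenberg.x = d.x from d.heisenbergFun_x, P]

theorem inv_a_mul_mul_a_mem_P {h : G} (hh : h ∈ d.P) : d.a⁻¹ * h * d.a ∈ d.P := by
  refine Subgroup.inv_mul_mul_mem_closure ?_ hh
  rintro _ ((rfl | ⟨i, rfl⟩) | ⟨i, rfl⟩)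
  · rw [d.hax]; exact one_mem _
  · rw [d.hay i]; exact zpow_mem (d.y_mem_P i) _
  · rw [d.haz i]; exact zpow_mem (d.z_mem_P i) _

theorem inv_b_mul_mul_b_mem_P {h : G} (hh : h ∈ d.P) : d.b⁻¹ * h * d.b ∈ d.P := by
  refine Subgroup.inv_mul_mul_mem_closure ?_ hh
  rintro _ ((rfl | ⟨i, rfl⟩) | ⟨i, rfl⟩)
  · rw [d.hbx]; exact pow_mem d.x_mem_P _
  · rw [d.hby i]; exact mul_mem (d.z_mem_P i) (d.y_mem_P i)
  · rw [d.hbz i]; exact mul_mem (d.y_mem_P i) (d.z_mem_P i)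

theorem inv_b_mul_a_zpow_mul_b (i : ℤ) : d.b⁻¹ * d.a ^ i * d.b = d.a ^ (-i) := by
  have := conj_zpow (i := i) (a := d.b⁻¹) (b := d.a)
  rwa [inv_inv, inv_mul_mul_eq_mul_inv_of_commutator_eq d.hba,
    show d.a * (d.a ^ 2)⁻¹ = d.a⁻¹ by group, inv_zpow', eq_comm] at this

theorem exists_eq_b_zpow_mul_a_zpow_mul (g : G) :
    ∃ j i : ℤ, ∃ h ∈ d.P, g = d.b ^ j * d.a ^ i * h := by
  refine Subgroup.closure_induction_right_of_finite
    (motive := fun g => ∃ j i : ℤ, ∃ h ∈ d.P, g = d.b ^ j * d.a ^ i * h)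
    ⟨0, 0, 1, one_mem _, by simp⟩ ?_ (d.hgen ▸ Subgroup.mem_top g)
  rintro _ s hs ⟨j, i, h, hh, rfl⟩
  rcases hs with ((rfl | rfl | rfl) | ⟨k, rfl⟩) | ⟨k, rfl⟩
  · exact ⟨j, i, h * d.x, mul_mem hh d.x_mem_P, by group⟩
  · exact ⟨j, i + 1, d.a⁻¹ * h * d.a, d.inv_a_mul_mul_a_mem_P hh, by group⟩
  · refine ⟨j + 1, -i, d.b⁻¹ * h * d.b, d.inv_b_mul_mul_b_mem_P hh, ?_⟩
    rw [← inv_b_mul_a_zpow_mul_b]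
    group
  · exact ⟨j, i, h * d.y k, mul_mem hh (d.y_mem_P k), by group⟩
  · exact ⟨j, i, h * d.z k, mul_mem hh (d.z_mem_P k), by group⟩

theorem card_le : Nat.card G ≤ 2 ^ d.n * Nat.card d.P := by
  let F : ZMod 2 × ZMod (2 ^ (d.n - 1)) × d.P → G := fun t =>
    d.b ^ t.1.val * d.a ^ t.2.1.val * t.2.2
  have hF : Function.Surjective F := fun g => by
    obtain ⟨j, i, h, hh, rfl⟩ := d.exists_eq_b_zpow_mul_a_zpow_mul g
    exact ⟨(j, i, ⟨h, hh⟩), by simp [F, pow_zmod_val_intCast d.hb2, pow_zmod_val_intCast d.han]⟩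
  calc Nat.card G ≤ Nat.card (ZMod 2 × ZMod (2 ^ (d.n - 1)) × d.P) :=
        Nat.card_le_card_of_surjective F hF
    _ = 2 ^ d.n * Nat.card d.P := by
      rw [Nat.card_prod, Nat.card_prod, Nat.card_zmod, Nat.card_zmod, ← mul_assoc, ← pow_succ',
        Nat.sub_add_cancel (by linarith [d.hn])]

theorem heisenbergHom_injective : Function.Injective d.heisenbergHom := by
  have hle : Nat.card (Heisenberg (ZMod d.p) (Fin d.r)) ≤ Nat.card d.heisenbergHom.range := by
    have := d.card_le
    rw [Nat.card_eq_fintype_card, d.hcard, mul_comm] at this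
    rw [d.range_heisenbergHom, Heisenberg.card_eq, Nat.card_zmod, Nat.card_fin]
    exact Nat.le_of_mul_le_mul_left this (by positivity)
  exact MonoidHom.rangeRestrict_injective_iff.mp
    (d.heisenbergHom.rangeRestrict_surjective.bijective_of_nat_card_le hle).1

abbrev V := (Fin d.r → ZMod d.p) × (Fin d.r → ZMod d.p)

def subgroupOfSubmodule (W : Submodule (ZMod d.p) d.V) : Subgroup G :=
  (Heisenberg.subgroupOfSubmodule W).map d.heisenbergHom

theorem subgroupOfSubmodule_injective : Function.Injective d.subgroupOfSubmodule :=
  (Subgroup.map_injective d.heisenbergHom_injective).comp Heisenberg.subgroupOfSubmodule_injective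

theorem setOf_cyclicQuot_eq_image :
    {K | K ≤ d.P ∧ K ≠ d.P ∧ NormalIn d.P K ∧ CyclicQuot d.P K} =
      d.subgroupOfSubmodule '' {W | IsCoatom W} := by
  have : Nonempty (Fin d.r) := ⟨⟨0, d.hr⟩⟩
  rw [← d.range_heisenbergHom, setOf_cyclicQuot_range_eq_image d.heisenbergHom_injective,
    Heisenberg.setOf_cyclicQuot_eq_image, Set.image_image]
  rfl

theorem closure_le_subgroupOfSubmodule_iff (W : Submodule (ZMod d.p) d.V) (j : ℕ) :
    Subgroup.closure ({d.x} ∪ Set.range fun i => d.y i ^ d.k ^ j * d.z i) ≤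
      d.subgroupOfSubmodule W ↔ smulGraph ((d.k : ZMod d.p) ^ j) ≤ W := by
  have hx : d.x ∈ d.subgroupOfSubmodule W := ⟨Heisenberg.x, W.zero_mem, d.heisenbergFun_x⟩
  have hyz (i : Fin d.r) : d.y i ^ d.k ^ j * d.z i =
      d.heisenbergHom ⟨0, Pi.single i ((d.k : ZMod d.p) ^ j), Pi.single i 1⟩ := by
    change _ = d.heisenbergFun _
    simp only [heisenbergFun]
    rw [yPow, zPow, powProd_single, powProd_single, ZMod.val_zero, pow_zero, one_mul,
      ZMod.val_one, pow_one, ← Nat.cast_pow, pow_zmod_val_natCast (d.hyp i)]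
  rw [Subgroup.closure_le, smulGraph_le_iff, Set.union_subset_iff, Set.singleton_subset_iff,
    Set.range_subset_iff]
  simp only [SetLike.mem_coe, hyz, subgroupOfSubmodule,
    Subgroup.mem_map_iff_mem d.heisenbergHom_injective, Heisenberg.mem_subgroupOfSubmodule]
  exact ⟨fun h => h.2, fun h => ⟨hx, h⟩⟩

theorem setOf_cyclicQuot_closure_le_eq_image :
    {K | (K ≤ d.P ∧ K ≠ d.P ∧ NormalIn d.P K ∧ CyclicQuot d.P K) ∧
        ∃ j, 1 ≤ j ∧ j ≤ 2 ^ (d.n - 1) ∧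
          Subgroup.closure ({d.x} ∪ Set.range fun i => d.y i ^ d.k ^ j * d.z i) ≤ K} =
      d.subgroupOfSubmodule '' {W | IsCoatom W ∧
        ∃ j ∈ Finset.Icc 1 (2 ^ (d.n - 1)), smulGraph ((d.k : ZMod d.p) ^ j) ≤ W} := by
  ext K
  constructor
  · rintro ⟨hK, j, hj1, hj2, hcl⟩
    obtain ⟨W, hW, rfl⟩ := (Set.ext_iff.mp d.setOf_cyclicQuot_eq_image K).mp hK
    exact ⟨W, ⟨hW, j, Finset.mem_Icc.mpr ⟨hj1, hj2⟩,
      (d.closure_le_subgroupOfSubmodule_iff W j).mp hcl⟩, rfl⟩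
  · rintro ⟨W, ⟨hW, j, hj, hUW⟩, rfl⟩
    exact ⟨(Set.ext_iff.mp d.setOf_cyclicQuot_eq_image _).mpr ⟨W, hW, rfl⟩, j,
      (Finset.mem_Icc.mp hj).1, (Finset.mem_Icc.mp hj).2,
      (d.closure_le_subgroupOfSubmodule_iff W j).mpr hUW⟩

theorem pow_k_injOn :
    Set.InjOn (fun j => (d.k : ZMod d.p) ^ j) (Finset.Icc 1 (2 ^ (d.n - 1)) : Set ℕ) := by
  intro i hi j hj hij
  simp only [Finset.coe_Icc, Set.mem_Icc] at hi hj
  have hfin : IsOfFinOrder (d.k : ZMod d.p) := orderOf_pos_iff.mp (d.hordk ▸ by positivity)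
  have hmod : i - 1 + 1 ≡ j - 1 + 1 [MOD 2 ^ (d.n - 1)] := by
    rw [Nat.sub_add_cancel hi.1, Nat.sub_add_cancel hj.1, Nat.ModEq, ← d.hordk]
    exact hfin.pow_inj_mod.mp hij
  have := Nat.ModEq.add_right_cancel' 1 hmod
  rw [Nat.ModEq, Nat.mod_eq_of_lt (by omega), Nat.mod_eq_of_lt (by omega)] at this
  omega

end Paper.GData

/-- (a) The number of subgroups `K ⊴ P` with `K ≠ P` and `P/K`
cyclic equals `(p^{2r} − 1)/(p − 1)`; (b) among these, the number of `K` containing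
`⟨x, y₁^{k^j}z₁, …, y_r^{k^j}z_r⟩` for some `1 ≤ j ≤ 2^{n-1}` equals
`2^{n-1}·(p^r − 1)/(p − 1)`. -/
theorem stmt15 {G : Type*} [Group G] [Fintype G] (d : Paper.GData G) :
    Set.ncard {K : Subgroup G | K ≤ d.P ∧ K ≠ d.P ∧
        Paper.NormalIn d.P K ∧ Paper.CyclicQuot d.P K} =
      (d.p ^ (2 * d.r) - 1) / (d.p - 1) ∧
    Set.ncard {K : Subgroup G | (K ≤ d.P ∧ K ≠ d.P ∧
        Paper.NormalIn d.P K ∧ Paper.CyclicQuot d.P K) ∧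
        ∃ j, 1 ≤ j ∧ j ≤ 2 ^ (d.n - 1) ∧
          Subgroup.closure (({d.x} : Set G) ∪ Set.range fun i => d.y i ^ d.k ^ j * d.z i) ≤ K} =
      2 ^ (d.n - 1) * ((d.p ^ d.r - 1) / (d.p - 1)) := by
  have hV : Module.finrank (ZMod d.p) d.V = 2 * d.r := by
    rw [Module.finrank_prod, Module.finrank_fin_fun, two_mul]
  have hrank (j : ℕ) (_ : j ∈ Finset.Icc 1 (2 ^ (d.n - 1))) :
      Module.finrank (ZMod d.p) (smulGraph (M := Fin d.r → ZMod d.p) ((d.k : ZMod d.p) ^ j)) =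
        d.r := by
    rw [finrank_smulGraph, Module.finrank_fin_fun]
  have hsup : ((Finset.Icc 1 (2 ^ (d.n - 1)) : Finset ℕ) : Set ℕ).Pairwise fun i j =>
      smulGraph (M := Fin d.r → ZMod d.p) ((d.k : ZMod d.p) ^ i) ⊔
        smulGraph ((d.k : ZMod d.p) ^ j) = ⊤ :=
    fun i hi j hj hij => smulGraph_sup_smulGraph fun h => hij (d.pow_k_injOn hi hj h)
  constructor
  · rw [d.setOf_cyclicQuot_eq_image, Set.ncard_image_of_injective _ d.subgroupOfSubmodule_injective,
      Submodule.ncard_setOf_isCoatom, Nat.card_zmod, hV]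
  · rw [d.setOf_cyclicQuot_closure_le_eq_image,
      Set.ncard_image_of_injective _ d.subgroupOfSubmodule_injective,
      Submodule.ncard_setOf_isCoatom_exists_le _ _ hrank hsup, Nat.card_zmod, hV, Nat.card_Icc,
      Nat.add_sub_cancel, two_mul, Nat.add_sub_cancel]
end

section
/- Let G be the group of order p^{2r+1}·2^n described in the context and let H be the subgroup generated by x, y₁, …, y_r, a. Then: (a) the commutator subgroup of H equals the subgroup generated by y₁, …, y_r; and (b) for a subgroup K of H, the pair (H,K) is a Shoda pair of G if and only if K is the subgroup generated by y₁, …, y_r and a^{2^j} for some j with 0 ≤ j ≤ n−1. -/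
open scoped Classical

/-!
In the coordinates `x^α · ∏ yᵢ^βᵢ · ∏ zᵢ^γᵢ · a^s · b^t` every element of `G` is written
uniquely. Every word can be brought to this form, since `x` commutes with `y`, `z`, `a`, moving
`yᵢ` past `zᵢ` costs a power of `x`, `a` acts on each `yᵢ`, `zᵢ` by a power and `b` swaps `yᵢ`
with `zᵢ⁻¹`; and there are exactly `|G|` such forms. Then `H = {x^α y^β a^s}` and
`K_j = {y^β a^{2^j σ}}`.

Since `[a, yᵢ] = yᵢ^{1-k}` with `k ≢ 1 (mod p)`, every `yᵢ` lies in `[H,H]` and in each `K` with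
`H/K` abelian, and `H/⟨y⟩` is abelian. An element outside `H` either involves `b`, and then its
commutator with `x` is `x²`, or has some `γᵢ ≢ 0`, and then its commutator with `yᵢ` has
`x`-exponent `-γᵢ`; neither lies in `K_j`. Conversely, if `(H,K)` is a Shoda pair then `x ∉ K`,
for otherwise `[H,z₁] ∩ H ≤ ⟨x⟩ ≤ K` although `z₁ ∉ H`. Raising `x^α a^σ ∈ K` to the power
`2^{n-1}` then forces `p ∣ α`, so `K = ⟨y, K ∩ ⟨a⟩⟩` and `K ∩ ⟨a⟩ = ⟨a^{2^j}⟩`.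
-/

namespace Paper

section Generic

variable {G : Type*} [Group G]

theorem conj_eq_mul_inv_of_commutator_eq {u v w : G} (h : u⁻¹ * v⁻¹ * u * v = w) :
    u⁻¹ * v * u = v * w⁻¹ := by
  rw [← h]; group

theorem commute_of_commutator_eq_one {u v : G} (h : u⁻¹ * v⁻¹ * u * v = 1) : Commute u v := by
  have h' := conj_eq_mul_inv_of_commutator_eq h
  rw [inv_one, mul_one] at h'
  calc u * v = u * (u⁻¹ * v * u) := by rw [h']
    _ = v * u := by group

theorem inv_mul_mul_eq_of_inv_mul_mul_eq {u v w : G} (h : u⁻¹ * v * u = v * w) :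
    v⁻¹ * u * v = u * w⁻¹ := by
  calc v⁻¹ * u * v = v⁻¹ * u * (u⁻¹ * v * u * w⁻¹) := by rw [h]; group
    _ = u * w⁻¹ := by group

theorem zpow_eq_zpow_of_pow_eq_one {g : G} {N : ℕ} (hg : g ^ N = 1) {m m' : ℤ}
    (h : m ≡ m' [ZMOD N]) : g ^ m = g ^ m' :=
  zpow_eq_zpow_iff_modEq.mpr <|
    h.of_dvd (Int.natCast_dvd_natCast.mpr (orderOf_dvd_of_pow_eq_one hg))

theorem mem_of_zpow_mem {K : Subgroup G} {g : G} {N : ℕ} (hg : g ^ N = 1) {c : ℤ}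
    (hc : IsCoprime c N) (hK : g ^ c ∈ K) : g ∈ K := by
  obtain ⟨u, v, huv⟩ := hc
  have hcu : c * u ≡ 1 [ZMOD N] := Int.modEq_iff_dvd.mpr ⟨v, by linear_combination -huv⟩
  rw [← zpow_one g, ← zpow_eq_zpow_of_pow_eq_one hg hcu, zpow_mul]
  exact zpow_mem hK u

theorem conj_zpow_zpow_of_conj_eq_mul {u v w : G} (h : u⁻¹ * v * u = v * w)
    (hwu : Commute w u) (hwv : Commute w v) (e c : ℤ) :
    (u ^ e)⁻¹ * v ^ c * u ^ e = v ^ c * w ^ (e * c) := by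
  have hnat : ∀ n : ℕ, (u ^ n)⁻¹ * v * u ^ n = v * w ^ n := by
    intro n
    induction n with
    | zero => simp
    | succ n ih =>
      calc (u ^ (n + 1))⁻¹ * v * u ^ (n + 1) = u⁻¹ * ((u ^ n)⁻¹ * v * u ^ n) * u := by
            rw [pow_succ]; group
        _ = u⁻¹ * v * (w ^ n * u) := by rw [ih]; group
        _ = v * w ^ (n + 1) := by rw [(hwu.pow_left n).eq, ← mul_assoc, h, pow_succ']; group
  have hv : (u ^ e)⁻¹ * v * u ^ e = v * w ^ e := by
    obtain ⟨n, rfl | rfl⟩ := Int.eq_nat_or_neg e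
    · simpa using hnat n
    · have key : (u ^ n)⁻¹ * (v * (w ^ n)⁻¹) * u ^ n = v := by
        calc _ = ((u ^ n)⁻¹ * v * u ^ n) * ((u ^ n)⁻¹ * ((w ^ n)⁻¹ * u ^ n)) := by group
          _ = v := by rw [hnat, (hwu.pow_pow n n).inv_left.eq]; group
      rw [zpow_neg, zpow_neg, inv_inv, zpow_natCast, zpow_natCast]
      nth_rewrite 1 [← key]
      group
  have hconj := conj_zpow (a := (u ^ e)⁻¹) (b := v) (i := c)
  rw [inv_inv] at hconj
  rw [← hconj, hv, (hwv.symm.zpow_right e).mul_zpow, ← zpow_mul]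

theorem exists_conj_zpow_eq_zpow {ι : Type*} {c : G} (hc : IsOfFinOrder c) {v : ι → G} {k : ℤ}
    (h : ∀ i, c⁻¹ * v i * c = v i ^ k) (s : ℤ) :
    ∃ M : ℤ, ∀ i e, (c ^ s)⁻¹ * v i ^ e * c ^ s = v i ^ (M * e) := by
  have hpow : ∀ (n : ℕ) i, (c ^ n)⁻¹ * v i * c ^ n = v i ^ (k ^ n) := by
    intro n i
    induction n with
    | zero => simp
    | succ n ih =>
      have hconj := conj_zpow (a := c⁻¹) (b := v i) (i := k ^ n)
      rw [inv_inv] at hconj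
      calc (c ^ (n + 1))⁻¹ * v i * c ^ (n + 1) = c⁻¹ * ((c ^ n)⁻¹ * v i * c ^ n) * c := by
            rw [pow_succ]; group
        _ = v i ^ k ^ (n + 1) := by rw [ih, ← hconj, h, ← zpow_mul, pow_succ']
  obtain ⟨n, hn⟩ : ∃ n : ℕ, c ^ n = c ^ s := by
    have : c ^ s ∈ (Submonoid.powers c : Set G) := by
      rw [hc.powers_eq_zpowers]; exact Subgroup.zpow_mem_zpowers c s
    exact this
  refine ⟨k ^ n, fun i e => ?_⟩
  have hconj := conj_zpow (a := (c ^ n)⁻¹) (b := v i) (i := e)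
  rw [inv_inv] at hconj
  rw [← hn, ← hconj, hpow, ← zpow_mul]

theorem exists_zpow_mem_iff_pow_dvd {K : Subgroup G} {a : G} {ℓ N : ℕ} (hℓ : ℓ.Prime)
    (ha : a ^ ℓ ^ N ∈ K) : ∃ j ≤ N, ∀ σ : ℤ, a ^ σ ∈ K ↔ ((ℓ ^ j : ℕ) : ℤ) ∣ σ := by
  let A : AddSubgroup ℤ :=
    { carrier := {σ | a ^ σ ∈ K}
      zero_mem' := by simp
      add_mem' := fun h₁ h₂ => by simpa [zpow_add] using mul_mem h₁ h₂
      neg_mem' := fun {σ} (h : a ^ σ ∈ K) => by simpa [zpow_neg] using inv_mem h }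
  obtain ⟨e, he⟩ := Int.subgroup_cyclic A
  have hA : ∀ σ : ℤ, a ^ σ ∈ K ↔ (e.natAbs : ℤ) ∣ σ := fun σ => by
    rw [Int.natAbs_dvd, ← Int.mem_zmultiples_iff, AddSubgroup.zmultiples_eq_closure, ← he]
    rfl
  obtain ⟨j, hj, hej⟩ : ∃ j ≤ N, e.natAbs = ℓ ^ j := by
    refine (Nat.dvd_prime_pow hℓ).mp (Int.natCast_dvd_natCast.mp ?_)
    simpa using (hA (ℓ ^ N : ℕ)).mp (by rwa [zpow_natCast])
  exact ⟨j, hj, fun σ => hej ▸ hA σ⟩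

theorem commutator_mem_of_cyclicQuot {H K : Subgroup G} (hnorm : NormalIn H K)
    (hcyc : CyclicQuot H K) {g₁ g₂ : G} (h₁ : g₁ ∈ H) (h₂ : g₂ ∈ H) :
    g₁⁻¹ * g₂⁻¹ * g₁ * g₂ ∈ K := by
  obtain ⟨h, hH, hgen⟩ := hcyc
  let N := K.subgroupOf H
  have : N.Normal := ⟨fun k hk u => by
    simpa [N, Subgroup.mem_subgroupOf, mul_assoc] using hnorm _ (inv_mem u.2) _ hk⟩
  have hpow : ∀ g (hg : g ∈ H), ∃ m : ℤ,
      (QuotientGroup.mk ⟨g, hg⟩ : H ⧸ N) = QuotientGroup.mk ⟨h, hH⟩ ^ m := by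
    intro g hg
    obtain ⟨m, hm⟩ := hgen g hg
    exact ⟨m, (QuotientGroup.eq.mpr (by simpa [N, Subgroup.mem_subgroupOf] using hm)).symm⟩
  obtain ⟨m₁, e₁⟩ := hpow g₁ h₁
  obtain ⟨m₂, e₂⟩ := hpow g₂ h₂
  have hone : (QuotientGroup.mk (⟨g₁, h₁⟩⁻¹ * ⟨g₂, h₂⟩⁻¹ * ⟨g₁, h₁⟩ * ⟨g₂, h₂⟩ : H) : H ⧸ N)
      = 1 := by
    simp only [QuotientGroup.mk_mul, QuotientGroup.mk_inv, e₁, e₂]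
    group
  simpa [N, Subgroup.mem_subgroupOf] using (QuotientGroup.eq_one_iff _).mp hone

end Generic

section ZPowProd

variable {G : Type*} [Group G] {m : ℕ} {v : Fin m → G}

def zpowProd (v : Fin m → G) (β : Fin m → ℤ) : G :=
  (List.ofFn fun i => v i ^ β i).prod

theorem zpowProd_congr {v' : Fin m → G} {β β' : Fin m → ℤ} (h : ∀ i, v i ^ β i = v' i ^ β' i) :
    zpowProd v β = zpowProd v' β' := by
  simp only [zpowProd, h]

theorem zpowProd_zero : zpowProd v 0 = 1 := by
  simp [zpowProd]

theorem zpowProd_mem {S : Subgroup G} (h : ∀ i, v i ∈ S) (β : Fin m → ℤ) : zpowProd v β ∈ S :=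
  list_prod_mem (List.forall_mem_ofFn_iff.mpr fun i => zpow_mem (h i) _)

theorem commute_zpowProd {g : G} {β : Fin m → ℤ} (h : ∀ i, Commute g (v i ^ β i)) :
    Commute g (zpowProd v β) :=
  Commute.list_prod_right _ _ (List.forall_mem_ofFn_iff.mpr h)

theorem map_zpowProd {G' F : Type*} [Group G'] [FunLike F G G'] [MonoidHomClass F G G'] (f : F)
    (β : Fin m → ℤ) :
    f (zpowProd v β) = zpowProd (f ∘ v) β := by
  simp [zpowProd, map_list_prod, List.map_ofFn, Function.comp_def]

theorem zpowProd_zpow (M : ℤ) (β : Fin m → ℤ) :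
    zpowProd (fun i => v i ^ M) β = zpowProd v (fun i => M * β i) :=
  zpowProd_congr fun _ => (zpow_mul _ _ _).symm

variable (hv : ∀ i j, Commute (v i) (v j))
include hv

theorem pairwise_commute_zpow (β : Fin m → ℤ) :
    (↑(Finset.univ : Finset (Fin m)) : Set (Fin m)).Pairwise
      (Function.onFun Commute fun i => v i ^ β i) :=
  fun i _ j _ _ => (hv i j).zpow_zpow _ _

theorem zpowProd_eq_noncommProd (β : Fin m → ℤ) :
    zpowProd v β = Finset.univ.noncommProd (fun i => v i ^ β i) (pairwise_commute_zpow hv β) := by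
  simp [zpowProd, Finset.noncommProd, List.ofFn_eq_map]

theorem zpowProd_add (β β' : Fin m → ℤ) :
    zpowProd v (β + β') = zpowProd v β * zpowProd v β' := by
  simp only [zpowProd_eq_noncommProd hv]
  rw [← Finset.noncommProd_mul_distrib _ _ _ _ fun i _ j _ _ => (hv i j).zpow_zpow _ _]
  exact Finset.noncommProd_congr rfl (fun i _ => zpow_add _ _ _) _

theorem zpowProd_eq_update_mul (i : Fin m) (β : Fin m → ℤ) :
    zpowProd v β = zpowProd v (Function.update β i 0) * v i ^ β i := by
  rw [zpowProd_eq_noncommProd hv, zpowProd_eq_noncommProd hv,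
    ← Finset.noncommProd_erase_mul _ (Finset.mem_univ i) (fun j => v j ^ β j),
    ← Finset.noncommProd_erase_mul _ (Finset.mem_univ i)
      (fun j => v j ^ Function.update β i 0 j)]
  simp only [Function.update_self, zpow_zero, mul_one]
  congr 1
  apply Finset.noncommProd_congr rfl
  intro j hj
  rw [Function.update_of_ne (Finset.ne_of_mem_erase hj)]

theorem zpowProd_single (i : Fin m) (e : ℤ) : zpowProd v (Pi.single i e) = v i ^ e := by
  rw [zpowProd_eq_update_mul hv i]
  simp [Pi.single, zpowProd_zero]

theorem zpowProd_mul_zpow (β : Fin m → ℤ) (i : Fin m) (e : ℤ) :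
    zpowProd v β * v i ^ e = zpowProd v (β + Pi.single i e) := by
  rw [zpowProd_add hv, zpowProd_single hv]

theorem conj_zpowProd_of_conj_eq_mul {g w : G} (i : Fin m) (hi : g⁻¹ * v i * g = v i * w)
    (hj : ∀ j, j ≠ i → Commute g (v j)) (hw : Commute w (v i)) (β : Fin m → ℤ) :
    g⁻¹ * zpowProd v β * g = zpowProd v β * w ^ β i := by
  have hrest : Commute g (zpowProd v (Function.update β i 0)) := commute_zpowProd fun j => by
    rcases eq_or_ne j i with rfl | hji
    · simp
    · exact (hj j hji).zpow_right _
  have hconj := conj_zpow (a := g⁻¹) (b := v i) (i := β i)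
  rw [inv_inv, hi, hw.symm.mul_zpow] at hconj
  rw [zpowProd_eq_update_mul hv i β]
  set P := zpowProd v (Function.update β i 0)
  calc g⁻¹ * (P * v i ^ β i) * g = (g⁻¹ * P) * v i ^ β i * g := by group
    _ = P * (g⁻¹ * v i ^ β i * g) := by rw [hrest.inv_left.eq]; group
    _ = P * v i ^ β i * w ^ β i := by rw [← hconj, mul_assoc]

end ZPowProd

namespace GData

variable {G : Type*} [Group G] [Fintype G] (d : GData G)

theorem commute_x_y (i : Fin d.r) : Commute d.x (d.y i) := commute_of_commutator_eq_one (d.hxy i)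

theorem commute_x_z (i : Fin d.r) : Commute d.x (d.z i) := commute_of_commutator_eq_one (d.hxz i)

theorem commute_x_a : Commute d.x d.a := (commute_of_commutator_eq_one d.hax).symm

theorem commute_y_y (i j : Fin d.r) : Commute (d.y i) (d.y j) :=
  commute_of_commutator_eq_one (d.hyy i j)

theorem commute_z_z (i j : Fin d.r) : Commute (d.z i) (d.z j) :=
  commute_of_commutator_eq_one (d.hzz i j)

theorem commute_y_z {i j : Fin d.r} (h : i ≠ j) : Commute (d.y i) (d.z j) :=
  commute_of_commutator_eq_one (d.hyz' i j h)

theorem b_inv : d.b⁻¹ = d.b := inv_eq_of_mul_eq_one_right (by rw [← sq, d.hb2])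

theorem conj_a_y (i : Fin d.r) : d.a⁻¹ * d.y i * d.a = d.y i ^ (d.k : ℤ) := by
  rw [conj_eq_mul_inv_of_commutator_eq (d.hay i), ← zpow_neg, ← zpow_one_add]
  ring_nf

theorem conj_a_z (i : Fin d.r) : d.a⁻¹ * d.z i * d.a = d.z i ^ (d.q : ℤ) := by
  rw [conj_eq_mul_inv_of_commutator_eq (d.haz i), ← zpow_neg, ← zpow_one_add]
  ring_nf

theorem conj_y_z (i : Fin d.r) : (d.y i)⁻¹ * d.z i * d.y i = d.z i * d.x⁻¹ :=
  conj_eq_mul_inv_of_commutator_eq (d.hyz i)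

theorem conj_z_y (i : Fin d.r) : (d.z i)⁻¹ * d.y i * d.z i = d.y i * d.x := by
  simpa using inv_mul_mul_eq_of_inv_mul_mul_eq (d.conj_y_z i)

theorem b_zpow_b {g w g' : G} (h : d.b⁻¹ * g⁻¹ * d.b * g = w) (hg' : g * w⁻¹ = g') (c : ℤ) :
    d.b * g ^ c * d.b = g' ^ c := by
  have h' := (conj_eq_mul_inv_of_commutator_eq h).trans hg'
  rw [d.b_inv] at h'
  nth_rewrite 2 [← d.b_inv]
  rw [← conj_zpow, d.b_inv, h']

theorem b_x_b (c : ℤ) : d.b * d.x ^ c * d.b = d.x ^ (-c) := by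
  rw [d.b_zpow_b d.hbx (g' := d.x⁻¹) (by group), inv_zpow']

theorem b_a_b (c : ℤ) : d.b * d.a ^ c * d.b = d.a ^ (-c) := by
  rw [d.b_zpow_b d.hba (g' := d.a⁻¹) (by group), inv_zpow']

theorem b_y_b (i : Fin d.r) (c : ℤ) : d.b * d.y i ^ c * d.b = d.z i ^ (-c) := by
  rw [d.b_zpow_b (d.hby i) (g' := (d.z i)⁻¹) (by group), inv_zpow']

theorem b_z_b (i : Fin d.r) (c : ℤ) : d.b * d.z i ^ c * d.b = d.y i ^ (-c) := by
  rw [d.b_zpow_b (d.hbz i) (g' := (d.y i)⁻¹) (by group), inv_zpow']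

theorem exists_a_zpow_mul_y_zpow (s : ℤ) :
    ∃ M : ℤ, ∀ i e, d.a ^ s * d.y i ^ e = d.y i ^ (M * e) * d.a ^ s := by
  obtain ⟨M, hM⟩ := exists_conj_zpow_eq_zpow (isOfFinOrder_of_finite d.a) d.conj_a_y (-s)
  exact ⟨M, fun i e => by rw [← hM, zpow_neg, inv_inv]; group⟩

theorem exists_a_zpow_mul_z_zpow (s : ℤ) :
    ∃ M : ℤ, ∀ i e, d.a ^ s * d.z i ^ e = d.z i ^ (M * e) * d.a ^ s := by
  obtain ⟨M, hM⟩ := exists_conj_zpow_eq_zpow (isOfFinOrder_of_finite d.a) d.conj_a_z (-s)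
  exact ⟨M, fun i e => by rw [← hM, zpow_neg, inv_inv]; group⟩

theorem exists_a_zpow_mul_zpowProd_y (s : ℤ) :
    ∃ M : ℤ, ∀ β, d.a ^ s * zpowProd d.y β = zpowProd d.y (fun i => M * β i) * d.a ^ s := by
  obtain ⟨M, hM⟩ := d.exists_a_zpow_mul_y_zpow s
  refine ⟨M, fun β => ?_⟩
  have hconj : MulAut.conj (d.a ^ s) ∘ d.y = fun i => d.y i ^ M := funext fun i => by
    rw [Function.comp_apply, MulAut.conj_apply, ← zpow_one (d.y i), hM, mul_one]; group
  rw [← zpowProd_zpow, ← hconj, ← map_zpowProd, MulAut.conj_apply]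
  group

theorem conj_y_zpow_zpowProd_z (i : Fin d.r) (e : ℤ) (γ : Fin d.r → ℤ) :
    (d.y i ^ e)⁻¹ * zpowProd d.z γ * d.y i ^ e = zpowProd d.z γ * d.x ^ (-(e * γ i)) := by
  have hi : (d.y i ^ e)⁻¹ * d.z i * d.y i ^ e = d.z i * (d.x ^ e)⁻¹ := by
    simpa using conj_zpow_zpow_of_conj_eq_mul (d.conj_y_z i) (d.commute_x_y i).inv_left
      (d.commute_x_z i).inv_left e 1
  rw [conj_zpowProd_of_conj_eq_mul d.commute_z_z i hi
    (fun j hj => (d.commute_y_z hj.symm).zpow_left e) ((d.commute_x_z i).zpow_left e).inv_left,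
    ← zpow_neg, ← zpow_mul, neg_mul]

theorem conj_zpowProd_z_y_zpow (i : Fin d.r) (e : ℤ) (γ : Fin d.r → ℤ) :
    (zpowProd d.z γ)⁻¹ * d.y i ^ e * zpowProd d.z γ = d.y i ^ e * d.x ^ (e * γ i) := by
  simpa using inv_mul_mul_eq_of_inv_mul_mul_eq (d.conj_y_zpow_zpowProd_z i e γ)

theorem conj_zpowProd_y_z (i : Fin d.r) (β : Fin d.r → ℤ) :
    (zpowProd d.y β)⁻¹ * d.z i * zpowProd d.y β = d.z i * (d.x ^ β i)⁻¹ :=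
  inv_mul_mul_eq_of_inv_mul_mul_eq <| conj_zpowProd_of_conj_eq_mul d.commute_y_y i (d.conj_z_y i)
    (fun _ hj => (d.commute_y_z hj).symm) (d.commute_x_y i) β

theorem commute_x_zpowProd_y (β : Fin d.r → ℤ) : Commute d.x (zpowProd d.y β) :=
  commute_zpowProd fun i => (d.commute_x_y i).zpow_right _

theorem commute_x_zpowProd_z (γ : Fin d.r → ℤ) : Commute d.x (zpowProd d.z γ) :=
  commute_zpowProd fun i => (d.commute_x_z i).zpow_right _

/-- Normal form of the elements of `P ⋊ ⟨a⟩`. -/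
def normalForm (α : ℤ) (β γ : Fin d.r → ℤ) (s : ℤ) : G :=
  d.x ^ α * zpowProd d.y β * zpowProd d.z γ * d.a ^ s

theorem normalForm_zero : d.normalForm 0 0 0 0 = 1 := by
  simp [normalForm, zpowProd_zero]

theorem commute_x_normalForm (α : ℤ) (β γ : Fin d.r → ℤ) (s : ℤ) :
    Commute d.x (d.normalForm α β γ s) :=
  ((((Commute.refl d.x).zpow_right α).mul_right (d.commute_x_zpowProd_y β)).mul_right
    (d.commute_x_zpowProd_z γ)).mul_right (d.commute_x_a.zpow_right s)

theorem normalForm_mul_x_zpow (α : ℤ) (β γ : Fin d.r → ℤ) (s c : ℤ) :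
    d.normalForm α β γ s * d.x ^ c = d.normalForm (α + c) β γ s := by
  rw [← ((d.commute_x_normalForm α β γ s).zpow_left c).eq, add_comm, normalForm, normalForm,
    zpow_add]
  simp only [mul_assoc]

theorem normalForm_mul_a_zpow (α : ℤ) (β γ : Fin d.r → ℤ) (s c : ℤ) :
    d.normalForm α β γ s * d.a ^ c = d.normalForm α β γ (s + c) := by
  simp only [normalForm, mul_assoc, zpow_add]

theorem exists_normalForm_mul_y_zpow (α : ℤ) (β γ : Fin d.r → ℤ) (s : ℤ) (i : Fin d.r) (e : ℤ) :
    ∃ m : ℤ, d.normalForm α β γ s * d.y i ^ e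
      = d.normalForm (α + -(m * γ i)) (β + Pi.single i m) γ s := by
  obtain ⟨M, hM⟩ := d.exists_a_zpow_mul_y_zpow s
  refine ⟨M * e, ?_⟩
  have hcross : zpowProd d.z γ * d.y i ^ (M * e)
      = d.y i ^ (M * e) * zpowProd d.z γ * d.x ^ (-(M * e * γ i)) := by
    rw [mul_assoc, ← d.conj_y_zpow_zpowProd_z]; group
  rw [← d.normalForm_mul_x_zpow]
  simp only [normalForm, ← zpowProd_mul_zpow d.commute_y_y]
  set Y := zpowProd d.y β
  set Z := zpowProd d.z γ
  set t := -(M * e * γ i)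
  calc d.x ^ α * Y * Z * d.a ^ s * d.y i ^ e
      = d.x ^ α * Y * (Z * d.y i ^ (M * e)) * d.a ^ s := by
        rw [mul_assoc _ (d.a ^ s), hM]; group
    _ = d.x ^ α * (Y * d.y i ^ (M * e)) * Z * (d.x ^ t * d.a ^ s) := by rw [hcross]; group
    _ = d.x ^ α * (Y * d.y i ^ (M * e)) * Z * d.a ^ s * d.x ^ t := by
        rw [(d.commute_x_a.zpow_zpow t s).eq]; group

theorem exists_normalForm_mul_z_zpow (α : ℤ) (β γ : Fin d.r → ℤ) (s : ℤ) (i : Fin d.r) (e : ℤ) :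
    ∃ m : ℤ, d.normalForm α β γ s * d.z i ^ e = d.normalForm α β (γ + Pi.single i m) s := by
  obtain ⟨M, hM⟩ := d.exists_a_zpow_mul_z_zpow s
  refine ⟨M * e, ?_⟩
  simp only [normalForm, mul_assoc, hM, ← zpowProd_mul_zpow d.commute_z_z]

theorem exists_normalForm_mul_zpow {w : G}
    (hw : w ∈ ({d.x, d.a} : Set G) ∪ Set.range d.y ∪ Set.range d.z)
    (α : ℤ) (β γ : Fin d.r → ℤ) (s c : ℤ) :
    ∃ α' β' γ' s', d.normalForm α β γ s * w ^ c = d.normalForm α' β' γ' s' := by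
  rcases hw with ((rfl | rfl) | ⟨i, rfl⟩) | ⟨i, rfl⟩
  · exact ⟨_, _, _, _, d.normalForm_mul_x_zpow α β γ s c⟩
  · exact ⟨_, _, _, _, d.normalForm_mul_a_zpow α β γ s c⟩
  · obtain ⟨m, hm⟩ := d.exists_normalForm_mul_y_zpow α β γ s i c
    exact ⟨_, _, _, _, hm⟩
  · obtain ⟨m, hm⟩ := d.exists_normalForm_mul_z_zpow α β γ s i c
    exact ⟨_, _, _, _, hm⟩

theorem exists_b_zpow_b {w : G} (hw : w ∈ ({d.x, d.a} : Set G) ∪ Set.range d.y ∪ Set.range d.z)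
    (c : ℤ) : ∃ w' ∈ ({d.x, d.a} : Set G) ∪ Set.range d.y ∪ Set.range d.z,
      d.b * w ^ c * d.b = w' ^ (-c) := by
  rcases hw with ((rfl | rfl) | ⟨i, rfl⟩) | ⟨i, rfl⟩
  · exact ⟨d.x, by simp, d.b_x_b c⟩
  · exact ⟨d.a, by simp, d.b_a_b c⟩
  · exact ⟨d.z i, Or.inr ⟨i, rfl⟩, d.b_y_b i c⟩
  · exact ⟨d.y i, Or.inl (Or.inr ⟨i, rfl⟩), d.b_z_b i c⟩

theorem exists_normalForm (g : G) :
    ∃ α β γ s, g = d.normalForm α β γ s ∨ g = d.normalForm α β γ s * d.b := by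
  let P : G → Prop := fun g =>
    ∃ α β γ s, g = d.normalForm α β γ s ∨ g = d.normalForm α β γ s * d.b
  set S₀ : Set G := ({d.x, d.a} : Set G) ∪ Set.range d.y ∪ Set.range d.z
  have hmul : ∀ g w, P g → w ∈ S₀ → ∀ c : ℤ, P (g * w ^ c) := by
    rintro g w ⟨α, β, γ, s, rfl | rfl⟩ hw c
    · obtain ⟨α', β', γ', s', h⟩ := d.exists_normalForm_mul_zpow hw α β γ s c
      exact ⟨α', β', γ', s', Or.inl h⟩
    · obtain ⟨w', hw', hb⟩ := d.exists_b_zpow_b hw c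
      obtain ⟨α', β', γ', s', h⟩ := d.exists_normalForm_mul_zpow hw' α β γ s (-c)
      refine ⟨α', β', γ', s', Or.inr ?_⟩
      calc d.normalForm α β γ s * d.b * w ^ c
          = d.normalForm α β γ s * (d.b * w ^ c * d.b) * d.b⁻¹ := by group
        _ = d.normalForm α' β' γ' s' * d.b := by rw [hb, h, d.b_inv]
  have hmulb : ∀ g, P g → P (g * d.b) := by
    rintro g ⟨α, β, γ, s, rfl | rfl⟩
    · exact ⟨α, β, γ, s, Or.inr rfl⟩
    · exact ⟨α, β, γ, s, Or.inl (by rw [mul_assoc, ← sq, d.hb2, mul_one])⟩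
  have hsplit : ∀ w ∈ ({d.x, d.a, d.b} : Set G) ∪ Set.range d.y ∪ Set.range d.z,
      w = d.b ∨ w ∈ S₀ := by
    intro w hw
    simp only [S₀, Set.mem_union, Set.mem_insert_iff, Set.mem_singleton_iff] at hw ⊢
    tauto
  change P g
  induction (d.hgen ▸ Subgroup.mem_top g :
      g ∈ Subgroup.closure (({d.x, d.a, d.b} : Set G) ∪ Set.range d.y ∪ Set.range d.z))
    using Subgroup.closure_induction_right with
  | one => exact ⟨0, 0, 0, 0, Or.inl d.normalForm_zero.symm⟩
  | mul_right g _ w hw ih =>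
    rcases hsplit w hw with rfl | hw
    · exact hmulb g ih
    · simpa using hmul g w ih hw 1
  | mul_inv_cancel g _ w hw ih =>
    rcases hsplit w hw with rfl | hw
    · simpa [d.b_inv] using hmulb g ih
    · simpa using hmul g w ih hw (-1)

theorem normalForm_congr {α α' : ℤ} {β β' γ γ' : Fin d.r → ℤ} {s s' : ℤ} (hα : (α : ZMod d.p) = α')
    (hβ : ∀ i, (β i : ZMod d.p) = β' i) (hγ : ∀ i, (γ i : ZMod d.p) = γ' i)
    (hs : (s : ZMod (2 ^ (d.n - 1))) = s') : d.normalForm α β γ s = d.normalForm α' β' γ' s' := by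
  simp only [ZMod.intCast_eq_intCast_iff] at hα hβ hγ hs
  simp only [normalForm, zpow_eq_zpow_of_pow_eq_one d.hxp hα, zpow_eq_zpow_of_pow_eq_one d.han hs,
    zpowProd_congr fun i => zpow_eq_zpow_of_pow_eq_one (d.hyp i) (hβ i),
    zpowProd_congr fun i => zpow_eq_zpow_of_pow_eq_one (d.hzp i) (hγ i)]

/-- Uniqueness by counting: the forms `normalForm α β γ s * b^t` exhaust `G` and there are
`|G|` of them. -/
theorem normalForm_eq_normalForm_iff {α α' : ℤ} {β β' γ γ' : Fin d.r → ℤ} {s s' : ℤ} :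
    d.normalForm α β γ s = d.normalForm α' β' γ' s' ↔
      (α : ZMod d.p) = α' ∧ (∀ i, (β i : ZMod d.p) = β' i) ∧ (∀ i, (γ i : ZMod d.p) = γ' i) ∧
        (s : ZMod (2 ^ (d.n - 1))) = s' := by
  refine ⟨fun h => ?_, fun ⟨hα, hβ, hγ, hs⟩ => d.normalForm_congr hα hβ hγ hs⟩
  have : NeZero d.p := ⟨d.hp.ne_zero⟩
  let Ψ : ZMod d.p × (Fin d.r → ZMod d.p) × (Fin d.r → ZMod d.p) × ZMod (2 ^ (d.n - 1)) × Bool →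
      G := fun v =>
    d.normalForm v.1.val (fun i => (v.2.1 i).val) (fun i => (v.2.2.1 i).val) v.2.2.2.1.val *
      if v.2.2.2.2 then d.b else 1
  have hΨ : ∀ (α : ℤ) (β γ : Fin d.r → ℤ) (s : ℤ) (t : Bool),
      Ψ (α, fun i => (β i : ZMod d.p), fun i => (γ i : ZMod d.p), s, t)
        = d.normalForm α β γ s * if t then d.b else 1 := fun α β γ s t => by
    simp only [Ψ]
    congr 1
    exact d.normalForm_congr (by simp) (by simp) (by simp) (by simp)
  have hsurj : Function.Surjective Ψ := fun g => by
    obtain ⟨α, β, γ, s, rfl | rfl⟩ := d.exists_normalForm g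
    · exact ⟨_, (hΨ α β γ s false).trans (mul_one _)⟩
    · exact ⟨_, hΨ α β γ s true⟩
  have hcard : Fintype.card (ZMod d.p × (Fin d.r → ZMod d.p) × (Fin d.r → ZMod d.p) ×
      ZMod (2 ^ (d.n - 1)) × Bool) = Fintype.card G := by
    simp only [Fintype.card_prod, Fintype.card_fun, ZMod.card, Fintype.card_bool,
      Fintype.card_fin, d.hcard]
    obtain ⟨n, hn⟩ : ∃ n, d.n = n + 1 := ⟨d.n - 1, by have := d.hn; omega⟩
    rw [hn, Nat.add_sub_cancel, pow_succ]
    ring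
  have hinj := ((Fintype.bijective_iff_surjective_and_card Ψ).mpr ⟨hsurj, hcard⟩).injective
  have := @hinj (α, fun i => (β i : ZMod d.p), fun i => (γ i : ZMod d.p), s, false)
    (α', fun i => (β' i : ZMod d.p), fun i => (γ' i : ZMod d.p), s', false) (by rw [hΨ, hΨ, h])
  simp only [Prod.mk.injEq, funext_iff] at this
  exact ⟨this.1, this.2.1, this.2.2.1, this.2.2.2.1⟩

theorem isCoprime_of_cast_ne_zero {c : ℤ} (hc : (c : ZMod d.p) ≠ 0) : IsCoprime c d.p :=
  ((Nat.prime_iff_prime_int.mp d.hp).coprime_iff_not_dvd.mpr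
    fun h => hc ((ZMod.intCast_zmod_eq_zero_iff_dvd c d.p).mpr h)).symm

theorem isCoprime_one_sub_k : IsCoprime (1 - (d.k : ℤ)) d.p := by
  refine d.isCoprime_of_cast_ne_zero fun h => ?_
  have hk : (d.k : ZMod d.p) = 1 := by push_cast at h; linear_combination -h
  have := d.hordk
  rw [hk, orderOf_one] at this
  exact (Nat.one_lt_two_pow (by have := d.hn; omega)).ne this

def H : Subgroup G := Subgroup.closure (({d.x, d.a} : Set G) ∪ Set.range d.y)

def K (j : ℕ) : Subgroup G := Subgroup.closure (Set.range d.y ∪ ({d.a ^ 2 ^ j} : Set G))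

theorem x_mem_H : d.x ∈ d.H := Subgroup.subset_closure (by simp)

theorem a_mem_H : d.a ∈ d.H := Subgroup.subset_closure (by simp)

theorem y_mem_H (i : Fin d.r) : d.y i ∈ d.H := Subgroup.subset_closure (Or.inr ⟨i, rfl⟩)

theorem normalForm_mem_H (α : ℤ) (β : Fin d.r → ℤ) (s : ℤ) : d.normalForm α β 0 s ∈ d.H := by
  simp only [normalForm, zpowProd_zero, mul_one]
  exact mul_mem (mul_mem (zpow_mem d.x_mem_H α) (zpowProd_mem d.y_mem_H β)) (zpow_mem d.a_mem_H s)

theorem mem_H_iff {g : G} : g ∈ d.H ↔ ∃ α β s, g = d.normalForm α β 0 s := by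
  refine ⟨fun hg => ?_, fun ⟨α, β, s, hg⟩ => hg ▸ d.normalForm_mem_H α β s⟩
  have hmul : ∀ α β s, ∀ w ∈ ({d.x, d.a} : Set G) ∪ Set.range d.y, ∀ c : ℤ,
      ∃ α' β' s', d.normalForm α β 0 s * w ^ c = d.normalForm α' β' 0 s' := by
    rintro α β s w ((rfl | rfl) | ⟨i, rfl⟩) c
    · exact ⟨_, _, _, d.normalForm_mul_x_zpow α β 0 s c⟩
    · exact ⟨_, _, _, d.normalForm_mul_a_zpow α β 0 s c⟩
    · obtain ⟨m, hm⟩ := d.exists_normalForm_mul_y_zpow α β 0 s i c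
      exact ⟨_, _, _, hm⟩
  induction hg using Subgroup.closure_induction_right with
  | one => exact ⟨0, 0, 0, d.normalForm_zero.symm⟩
  | mul_right g _ w hw ih =>
    obtain ⟨α, β, s, rfl⟩ := ih
    simpa using hmul α β s w hw 1
  | mul_inv_cancel g _ w hw ih =>
    obtain ⟨α, β, s, rfl⟩ := ih
    simpa using hmul α β s w hw (-1)

theorem mem_K_iff {j : ℕ} {g : G} : g ∈ d.K j ↔ ∃ β σ, g = d.normalForm 0 β 0 (2 ^ j * σ) := by
  have hapow : ∀ σ : ℤ, (d.a ^ 2 ^ j) ^ σ = d.a ^ ((2 : ℤ) ^ j * σ) := fun σ => by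
    rw [zpow_mul]; norm_cast
  refine ⟨fun hg => ?_, fun ⟨β, σ, hg⟩ => ?_⟩
  · have hmul : ∀ β σ, ∀ w ∈ Set.range d.y ∪ ({d.a ^ 2 ^ j} : Set G), ∀ c : ℤ,
        ∃ β' σ', d.normalForm 0 β 0 (2 ^ j * σ) * w ^ c = d.normalForm 0 β' 0 (2 ^ j * σ') := by
      rintro β σ w (⟨i, rfl⟩ | rfl) c
      · obtain ⟨m, hm⟩ := d.exists_normalForm_mul_y_zpow 0 β 0 (2 ^ j * σ) i c
        exact ⟨_, σ, by simpa using hm⟩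
      · exact ⟨β, σ + c, by rw [hapow, d.normalForm_mul_a_zpow, mul_add]⟩
    induction hg using Subgroup.closure_induction_right with
    | one => exact ⟨0, 0, by simpa using d.normalForm_zero.symm⟩
    | mul_right g _ w hw ih =>
      obtain ⟨β, σ, rfl⟩ := ih
      simpa using hmul β σ w hw 1
    | mul_inv_cancel g _ w hw ih =>
      obtain ⟨β, σ, rfl⟩ := ih
      simpa using hmul β σ w hw (-1)
  · have hy : ∀ i, d.y i ∈ d.K j :=
      fun i => Subgroup.subset_closure (Set.mem_union_left _ (Set.mem_range_self i))
    have ha : d.a ^ 2 ^ j ∈ d.K j := Subgroup.subset_closure (Or.inr rfl)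
    simp only [hg, normalForm, zpowProd_zero, zpow_zero, one_mul, mul_one, ← hapow]
    exact mul_mem (zpowProd_mem hy β) (zpow_mem ha σ)

theorem exists_normalForm_mul_normalForm (s : ℤ) :
    ∃ M : ℤ, ∀ (α α' : ℤ) (β β' : Fin d.r → ℤ) (s' : ℤ),
      d.normalForm α β 0 s * d.normalForm α' β' 0 s'
        = d.normalForm (α + α') (β + fun i => M * β' i) 0 (s + s') := by
  obtain ⟨M, hM⟩ := d.exists_a_zpow_mul_zpowProd_y s
  refine ⟨M, fun α α' β β' s' => ?_⟩
  simp only [normalForm, zpowProd_zero, mul_one, zpowProd_add d.commute_y_y, zpow_add]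
  calc d.x ^ α * zpowProd d.y β * d.a ^ s * (d.x ^ α' * zpowProd d.y β' * d.a ^ s')
      = d.x ^ α * zpowProd d.y β * (d.a ^ s * d.x ^ α') * zpowProd d.y β' * d.a ^ s' := by
        group
    _ = d.x ^ α * (zpowProd d.y β * d.x ^ α') * (d.a ^ s * zpowProd d.y β') * d.a ^ s' := by
        rw [← (d.commute_x_a.zpow_zpow α' s).eq]; group
    _ = _ := by
        rw [← ((d.commute_x_zpowProd_y β).zpow_left α').eq, hM]; group

theorem exists_normalForm_inv (α : ℤ) (β : Fin d.r → ℤ) (s : ℤ) :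
    ∃ B, (d.normalForm α β 0 s)⁻¹ = d.normalForm (-α) B 0 (-s) := by
  obtain ⟨M, hM⟩ := d.exists_normalForm_mul_normalForm (-s)
  refine ⟨fun i => -(M * β i), (eq_inv_of_mul_eq_one_left ?_).symm⟩
  rw [hM, neg_add_cancel, neg_add_cancel, ← d.normalForm_zero]
  congr 1
  funext i
  simp

open scoped commutatorElement in
theorem commutator_H : ⁅d.H, d.H⁆ = Subgroup.closure (Set.range d.y) := by
  apply le_antisymm
  · rw [Subgroup.commutator_le]
    intro g hg h hh
    obtain ⟨α, β, s, rfl⟩ := d.mem_H_iff.mp hg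
    obtain ⟨α', β', s', rfl⟩ := d.mem_H_iff.mp hh
    obtain ⟨M, hM⟩ := d.exists_normalForm_mul_normalForm s
    obtain ⟨M', hM'⟩ := d.exists_normalForm_mul_normalForm s'
    rw [commutatorElement_def, show ∀ u v : G, u * v * u⁻¹ * v⁻¹ = (u * v) * (v * u)⁻¹ by
      intros; group, hM, hM', add_comm α', add_comm s']
    have key : ∀ (A S : ℤ) (B B' : Fin d.r → ℤ),
        d.normalForm A B 0 S * (d.normalForm A B' 0 S)⁻¹
          = zpowProd d.y B * (zpowProd d.y B')⁻¹ := by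
      intro A S B B'
      have hx : Commute (d.x ^ A) (zpowProd d.y B * (zpowProd d.y B')⁻¹) :=
        ((d.commute_x_zpowProd_y _).mul_right (d.commute_x_zpowProd_y _).inv_right).zpow_left _
      calc _ = d.x ^ A * (zpowProd d.y B * (zpowProd d.y B')⁻¹) * (d.x ^ A)⁻¹ := by
            simp only [normalForm, zpowProd_zero, mul_one]; group
        _ = _ := by rw [hx.eq, mul_inv_cancel_right]
    have hY : ∀ i, d.y i ∈ Subgroup.closure (Set.range d.y) :=
      fun i => Subgroup.subset_closure (Set.mem_range_self i)
    rw [key]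
    exact mul_mem (zpowProd_mem hY _) (inv_mem (zpowProd_mem hY _))
  · rw [Subgroup.closure_le]
    rintro _ ⟨i, rfl⟩
    have h := Subgroup.commutator_mem_commutator (inv_mem d.a_mem_H) (inv_mem (d.y_mem_H i))
    rw [commutatorElement_def, inv_inv, inv_inv, d.hay i] at h
    exact mem_of_zpow_mem (d.hyp i) d.isCoprime_one_sub_k h

theorem cast_two_ne_zero : ((2 : ℤ) : ZMod d.p) ≠ 0 := fun h => by
  have h2 := Int.le_of_dvd two_pos ((ZMod.intCast_zmod_eq_zero_iff_dvd 2 d.p).mp h)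
  have := d.hp.two_le
  have := d.hp4
  omega

theorem cast_eq_zero_of_normalForm_mem_K {j : ℕ} {α : ℤ} {β : Fin d.r → ℤ}
    (h : d.normalForm α β 0 0 ∈ d.K j) :
    (α : ZMod d.p) = 0 := by
  obtain ⟨β', σ, h'⟩ := d.mem_K_iff.mp h
  simpa using (d.normalForm_eq_normalForm_iff.mp h').1

theorem K_le_H (j : ℕ) : d.K j ≤ d.H := by
  rw [K, Subgroup.closure_le]
  rintro _ (⟨i, rfl⟩ | rfl)
  exacts [d.y_mem_H i, pow_mem d.a_mem_H _]

theorem normalIn_H_K (j : ℕ) : NormalIn d.H (d.K j) := by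
  intro h hh g hg
  obtain ⟨α, β, s, rfl⟩ := d.mem_H_iff.mp hh
  obtain ⟨β', σ, rfl⟩ := d.mem_K_iff.mp hg
  obtain ⟨B, hB⟩ := d.exists_normalForm_inv α β s
  obtain ⟨M, hM⟩ := d.exists_normalForm_mul_normalForm (-s)
  obtain ⟨M', hM'⟩ := d.exists_normalForm_mul_normalForm (-s + 2 ^ j * σ)
  rw [hB, hM, hM', d.mem_K_iff]
  exact ⟨_, σ, by congr 1 <;> ring⟩

/-- The generator `x a` reaches every coset by the Chinese remainder theorem for `p` and `2^j`. -/
theorem cyclicQuot_H_K (j : ℕ) : CyclicQuot d.H (d.K j) := by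
  refine ⟨d.x * d.a, mul_mem d.x_mem_H d.a_mem_H, fun g hg => ?_⟩
  obtain ⟨α, β, s, rfl⟩ := d.mem_H_iff.mp hg
  obtain ⟨u, v, huv⟩ : IsCoprime (d.p : ℤ) (2 ^ j) :=
    (d.isCoprime_of_cast_ne_zero d.cast_two_ne_zero).pow_left.symm
  set m := α * (v * 2 ^ j) + s * (u * d.p)
  have hxa : (d.x * d.a) ^ m = d.normalForm m 0 0 m := by
    simp [d.commute_x_a.mul_zpow, normalForm, zpowProd_zero]
  obtain ⟨B, hB⟩ := d.exists_normalForm_inv m 0 m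
  obtain ⟨M, hM⟩ := d.exists_normalForm_mul_normalForm (-m)
  refine ⟨m, ?_⟩
  rw [hxa, hB, hM, d.mem_K_iff]
  refine ⟨_, s * v - α * v, d.normalForm_congr ?_ (fun _ => rfl) (fun _ => rfl) ?_⟩
  · rw [Int.cast_zero, ZMod.intCast_zmod_eq_zero_iff_dvd]
    exact ⟨α * u - s * u, by linear_combination (-α) * huv⟩
  · congr 1
    linear_combination (-s) * huv

theorem exists_commutator_normalForm_y (α : ℤ) (β γ : Fin d.r → ℤ) (s : ℤ) (i : Fin d.r) :
    ∃ m : ℤ, (d.normalForm α β γ s)⁻¹ * (d.y i)⁻¹ * d.normalForm α β γ s * d.y i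
      = d.normalForm (-γ i) (Pi.single i m) 0 0 := by
  obtain ⟨M, hM⟩ := d.exists_a_zpow_mul_y_zpow (-s)
  refine ⟨1 - M, ?_⟩
  set P := d.x ^ α * zpowProd d.y β
  set Z := zpowProd d.z γ
  have hP : P⁻¹ * d.y i ^ (-1 : ℤ) * P = d.y i ^ (-1 : ℤ) := by
    have hc : Commute P (d.y i ^ (-1 : ℤ)) :=
      (((d.commute_x_y i).zpow_left α).mul_left
        (commute_zpowProd fun j => (d.commute_y_y i j).zpow_right _).symm).zpow_right _
    rw [mul_assoc, ← hc.eq, inv_mul_cancel_left]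
  have hZ : Z⁻¹ * d.y i ^ (-1 : ℤ) * Z = d.y i ^ (-1 : ℤ) * d.x ^ (-γ i) := by
    simpa using d.conj_zpowProd_z_y_zpow i (-1) γ
  have ha : d.a ^ (-s) * d.y i ^ (-1 : ℤ) * d.a ^ s = d.y i ^ (-M) := by
    rw [hM]; group
  have hX : d.a ^ (-s) * d.x ^ (-γ i) * d.a ^ s = d.x ^ (-γ i) := by
    rw [mul_assoc, (d.commute_x_a.zpow_zpow _ s).eq]; group
  calc (d.x ^ α * zpowProd d.y β * Z * d.a ^ s)⁻¹ * (d.y i)⁻¹ *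
        (d.x ^ α * zpowProd d.y β * Z * d.a ^ s) * d.y i
      = d.a ^ (-s) * (Z⁻¹ * (P⁻¹ * d.y i ^ (-1 : ℤ) * P) * Z) * d.a ^ s * d.y i := by
        simp only [P, zpow_neg, zpow_one]; group
    _ = (d.a ^ (-s) * d.y i ^ (-1 : ℤ) * d.a ^ s) *
          (d.a ^ (-s) * d.x ^ (-γ i) * d.a ^ s) * d.y i := by
        rw [hP, hZ]; group
    _ = d.y i ^ (-M) * d.y i * d.x ^ (-γ i) := by
        rw [ha, hX, mul_assoc, ((d.commute_x_y i).zpow_left _).eq]; group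
    _ = d.x ^ (-γ i) * d.y i ^ (1 - M) := by
        rw [((d.commute_x_y i).zpow_zpow _ (1 - M)).eq]; group
    _ = d.normalForm (-γ i) (Pi.single i (1 - M)) 0 0 := by
        simp [normalForm, zpowProd_single d.commute_y_y, zpowProd_zero]

theorem commutator_normalForm_b_x (α : ℤ) (β γ : Fin d.r → ℤ) (s : ℤ) :
    (d.normalForm α β γ s * d.b)⁻¹ * d.x⁻¹ * (d.normalForm α β γ s * d.b) * d.x = d.x ^ 2 := by
  rw [← d.hbx]
  calc _ = d.b⁻¹ * ((d.normalForm α β γ s)⁻¹ * (d.x⁻¹ * d.normalForm α β γ s)) * d.b * d.x := by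
        group
    _ = _ := by rw [(d.commute_x_normalForm α β γ s).inv_left.eq, inv_mul_cancel_left]

theorem mem_H_of_commSub_inf_le_K {j : ℕ} {g : G} (hg : commSub d.H g ⊓ d.H ≤ d.K j) :
    g ∈ d.H := by
  obtain ⟨α, β, γ, s, rfl | rfl⟩ := d.exists_normalForm g
  · by_cases hγ : ∀ i, (γ i : ZMod d.p) = 0
    · rw [d.normalForm_congr rfl (fun _ => rfl) (fun i => (hγ i).trans Int.cast_zero.symm) rfl]
      exact d.normalForm_mem_H α β s
    · obtain ⟨i, hi⟩ := not_forall.mp hγ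
      obtain ⟨m, hm⟩ := d.exists_commutator_normalForm_y α β γ s i
      have hK := hg
        ⟨Subgroup.subset_closure ⟨d.y i, d.y_mem_H i, hm.symm⟩, d.normalForm_mem_H _ _ _⟩
      exact (hi (by simpa using d.cast_eq_zero_of_normalForm_mem_K hK)).elim
  · have hK := hg ⟨Subgroup.subset_closure
      ⟨d.x, d.x_mem_H, (d.commutator_normalForm_b_x α β γ s).symm⟩, pow_mem d.x_mem_H 2⟩
    rw [show d.x ^ 2 = d.normalForm 2 0 0 0 by simp [normalForm, zpowProd_zero]] at hK
    exact absurd (d.cast_eq_zero_of_normalForm_mem_K hK) d.cast_two_ne_zero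

theorem isShodaPair_H_K (j : ℕ) : IsShodaPair d.H (d.K j) :=
  ⟨d.K_le_H j, d.normalIn_H_K j, d.cyclicQuot_H_K j, fun _ => d.mem_H_of_commSub_inf_le_K⟩

theorem exists_commutator_z_normalForm (i : Fin d.r) (α : ℤ) (β : Fin d.r → ℤ) (s : ℤ) :
    ∃ m : ℤ, (d.z i)⁻¹ * (d.normalForm α β 0 s)⁻¹ * d.z i * d.normalForm α β 0 s
      = d.z i ^ m * d.x ^ (-β i) := by
  obtain ⟨M, hM⟩ := d.exists_a_zpow_mul_z_zpow (-s)
  refine ⟨M - 1, ?_⟩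
  have hx : (d.x ^ α)⁻¹ * d.z i * d.x ^ α = d.z i := by
    rw [mul_assoc, ← ((d.commute_x_z i).zpow_left α).eq, inv_mul_cancel_left]
  have ha : d.a ^ (-s) * d.z i * d.a ^ s = d.z i ^ M := by
    rw [← zpow_one (d.z i), hM, mul_one]; group
  have hX : d.a ^ (-s) * (d.x ^ β i)⁻¹ * d.a ^ s = (d.x ^ β i)⁻¹ := by
    rw [mul_assoc, (d.commute_x_a.zpow_zpow (β i) s).inv_left.eq]; group
  simp only [normalForm, zpowProd_zero, mul_one]
  calc (d.z i)⁻¹ * (d.x ^ α * zpowProd d.y β * d.a ^ s)⁻¹ * d.z i *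
        (d.x ^ α * zpowProd d.y β * d.a ^ s)
      = (d.z i)⁻¹ * (d.a ^ (-s) * ((zpowProd d.y β)⁻¹ * ((d.x ^ α)⁻¹ * d.z i * d.x ^ α) *
          zpowProd d.y β) * d.a ^ s) := by
        simp only [zpow_neg]; group
    _ = (d.z i)⁻¹ * ((d.a ^ (-s) * d.z i * d.a ^ s) * (d.a ^ (-s) * (d.x ^ β i)⁻¹ * d.a ^ s)) := by
        rw [hx, d.conj_zpowProd_y_z]; group
    _ = _ := by rw [ha, hX]; group

theorem z_not_mem_H (i : Fin d.r) : d.z i ∉ d.H := fun h => by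
  have : Fact (1 < d.p) := ⟨d.hp.one_lt⟩
  obtain ⟨α, β, s, h⟩ := d.mem_H_iff.mp h
  have hz : d.z i = d.normalForm 0 0 (Pi.single i 1) 0 := by
    simp [normalForm, zpowProd_zero, zpowProd_single d.commute_z_z]
  simpa using (d.normalForm_eq_normalForm_iff.mp (hz.symm.trans h)).2.2.1 i

open scoped Pointwise in
/-- `[H, zᵢ]` lies in the abelian group `⟨zᵢ⟩⟨x⟩`, whose elements in `H` are powers of `x`. -/
theorem commSub_z_inf_H_le {K : Subgroup G} (hx : d.x ∈ K) (i : Fin d.r) :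
    commSub d.H (d.z i) ⊓ d.H ≤ K := by
  set Q := Subgroup.zpowers (d.z i) ⊔ Subgroup.zpowers d.x
  have hQ : commSub d.H (d.z i) ≤ Q := by
    rw [commSub, Subgroup.closure_le]
    rintro _ ⟨h, hh, rfl⟩
    obtain ⟨α, β, s, rfl⟩ := d.mem_H_iff.mp hh
    obtain ⟨m, hm⟩ := d.exists_commutator_z_normalForm i α β s
    rw [SetLike.mem_coe, hm]
    exact mul_mem (Subgroup.mem_sup_left (Subgroup.zpow_mem_zpowers _ _))
      (Subgroup.mem_sup_right (Subgroup.zpow_mem_zpowers _ _))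
  have hnorm :
      Subgroup.zpowers (d.z i) ≤ Subgroup.normalizer (Subgroup.zpowers d.x : Set G) := by
    rw [Subgroup.zpowers_le]
    apply Subgroup.centralizer_le_normalizer
    rw [Subgroup.mem_centralizer_iff]
    rintro _ ⟨k, rfl⟩
    exact ((d.commute_x_z i).zpow_left k).eq
  rintro w ⟨hw, hwH⟩
  have hw' : w ∈ (Subgroup.zpowers (d.z i) : Set G) * (Subgroup.zpowers d.x : Set G) := by
    rw [← Subgroup.coe_mul_of_left_le_normalizer_right _ _ hnorm]; exact hQ hw
  obtain ⟨_, ⟨c, rfl⟩, _, ⟨e, rfl⟩, rfl⟩ := hw'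
  beta_reduce at hwH ⊢
  obtain ⟨α, β, s, h⟩ := d.mem_H_iff.mp hwH
  have hzx : d.z i ^ c * d.x ^ e = d.normalForm e 0 (Pi.single i c) 0 := by
    rw [← ((d.commute_x_z i).zpow_zpow e c).eq]
    simp [normalForm, zpowProd_zero, zpowProd_single d.commute_z_z]
  have hc := (d.normalForm_eq_normalForm_iff.mp (hzx.symm.trans h)).2.2.1 i
  simp only [Pi.single_eq_same, Pi.zero_apply, Int.cast_zero,
    ZMod.intCast_zmod_eq_zero_iff_dvd] at hc
  rw [zpow_eq_zpow_of_pow_eq_one (d.hzp i) (Int.modEq_zero_iff_dvd.mpr hc), zpow_zero, one_mul]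
  exact zpow_mem hx e

theorem x_not_mem_of_isShodaPair {K : Subgroup G} (hK : IsShodaPair d.H K) : d.x ∉ K :=
  fun hx => d.z_not_mem_H ⟨0, d.hr⟩ (hK.2.2.2 _ (d.commSub_z_inf_H_le hx _))

/-- Since `x` commutes with `a` and `a^{2^{n-1}} = 1`, the `2^{n-1}`-th power of `x^α a^σ` is
`x^{α 2^{n-1}}`, which avoids `K` unless `p ∣ α`. -/
theorem exists_eq_zpowProd_y_mul_a_zpow {K : Subgroup G} (hKH : K ≤ d.H) (hy : ∀ i, d.y i ∈ K)
    (hx : d.x ∉ K) {κ : G} (hκ : κ ∈ K) :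
    ∃ (β : Fin d.r → ℤ) (σ : ℤ), κ = zpowProd d.y β * d.a ^ σ ∧ d.a ^ σ ∈ K := by
  obtain ⟨α, β, σ, rfl⟩ := d.mem_H_iff.mp (hKH hκ)
  have hxa : d.x ^ α * d.a ^ σ ∈ K := by
    have : d.x ^ α * d.a ^ σ = (zpowProd d.y β)⁻¹ * d.normalForm α β 0 σ := by
      simp only [normalForm, zpowProd_zero, mul_one, ← mul_assoc,
        ((d.commute_x_zpowProd_y β).zpow_left α).eq]
      group
    rw [this]
    exact mul_mem (inv_mem (zpowProd_mem hy β)) hκ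
  have hα : (α : ZMod d.p) = 0 := by
    by_contra hα
    refine hx (mem_of_zpow_mem d.hxp ((d.isCoprime_of_cast_ne_zero hα).mul_left
      (IsCoprime.pow_left (m := d.n - 1) (d.isCoprime_of_cast_ne_zero d.cast_two_ne_zero))) ?_)
    have ha1 : (d.a ^ σ) ^ 2 ^ (d.n - 1) = 1 := by
      rw [← zpow_natCast, ← zpow_mul, mul_comm, zpow_mul, zpow_natCast, d.han, one_zpow]
    have hpow : (d.x ^ α * d.a ^ σ) ^ 2 ^ (d.n - 1) = d.x ^ (α * 2 ^ (d.n - 1)) := by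
      rw [(d.commute_x_a.zpow_zpow α σ).mul_pow, ha1, mul_one, ← zpow_natCast, ← zpow_mul]
      norm_cast
    exact hpow ▸ pow_mem hxa _
  have hx1 : d.x ^ α = 1 := by
    rw [zpow_eq_zpow_of_pow_eq_one d.hxp ((ZMod.intCast_eq_intCast_iff _ _ _).mp
      (hα.trans Int.cast_zero.symm)), zpow_zero]
  refine ⟨β, σ, ?_, ?_⟩
  · simp [normalForm, zpowProd_zero, hx1]
  · simpa [hx1] using hxa

theorem exists_eq_K_of_isShodaPair {K : Subgroup G} (hK : IsShodaPair d.H K) :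
    ∃ j, j ≤ d.n - 1 ∧ K = d.K j := by
  have hx := d.x_not_mem_of_isShodaPair hK
  obtain ⟨hKH, hnorm, hcyc, -⟩ := hK
  have hy : ∀ i, d.y i ∈ K := fun i => mem_of_zpow_mem (d.hyp i) d.isCoprime_one_sub_k
    (d.hay i ▸ commutator_mem_of_cyclicQuot hnorm hcyc d.a_mem_H (d.y_mem_H i))
  obtain ⟨j, hj, haj⟩ := exists_zpow_mem_iff_pow_dvd Nat.prime_two
    (by rw [d.han]; exact one_mem K : d.a ^ 2 ^ (d.n - 1) ∈ K)
  refine ⟨j, hj, le_antisymm (fun κ hκ => ?_) ?_⟩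
  · obtain ⟨β, σ, rfl, hσ⟩ := d.exists_eq_zpowProd_y_mul_a_zpow hKH hy hx hκ
    obtain ⟨τ, rfl⟩ := (haj σ).mp hσ
    exact d.mem_K_iff.mpr ⟨β, τ, by simp [normalForm, zpowProd_zero]⟩
  · rw [GData.K, Subgroup.closure_le]
    rintro _ (⟨i, rfl⟩ | rfl)
    · exact hy i
    · simpa only [zpow_natCast, SetLike.mem_coe] using (haj (2 ^ j : ℕ)).mpr dvd_rfl

end GData

end Paper

/-- For `H = ⟨x, y₁, …, y_r, a⟩`: (a) the commutator subgroup of `H`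
equals `⟨y₁, …, y_r⟩`; (b) for `K ≤ H`, the pair `(H,K)` is a Shoda pair of `G` iff
`K = ⟨y₁, …, y_r, a^{2^j}⟩` for some `0 ≤ j ≤ n−1`. -/
theorem stmt16 {G : Type*} [Group G] [Fintype G] (d : Paper.GData G)
    (H : Subgroup G) (hH : H = Subgroup.closure (({d.x, d.a} : Set G) ∪ Set.range d.y)) :
    ⁅H, H⁆ = Subgroup.closure (Set.range d.y) ∧
    (∀ K : Subgroup G, K ≤ H →
      (Paper.IsShodaPair H K ↔
        ∃ j, j ≤ d.n - 1 ∧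
          K = Subgroup.closure (Set.range d.y ∪ ({d.a ^ 2 ^ j} : Set G)))) := by
  subst hH
  refine ⟨d.commutator_H, fun K _ => ⟨d.exists_eq_K_of_isShodaPair, ?_⟩⟩
  rintro ⟨j, -, rfl⟩
  exact d.isShodaPair_H_K j
end
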